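/- arXiv:2310.19586 — 10 statements merged into one kernel-verified Lean document; each statement's English description precedes it below -/
import Mathlib

section
/- Let α > 0, N a positive integer, l a positive integer, and for each i = 1,…,l let e_i(1),…,e_i(N) be fixed real numbers. Then the function (β_1,…,β_l) ↦ Σ_{i=1}^l β_i^α (1 − (1/N) Σ_{k=1}^N exp(−|e_i(k)|^α / β_i^α)) tends to (1/N) Σ_{i=1}^l Σ_{k=1}^N |e_i(k)|^α as all β_i tend to +∞ (i.e., along the product of atTop filters in each β_i). -/
open Filter Real Topology

/-- Key scalar limit: `x * (1 - exp (-(c / x))) → c` as `x → ∞`. -/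
lemma key_tendsto (c : ℝ) :
    Tendsto (fun x : ℝ => x * (1 - Real.exp (-(c / x)))) atTop (𝓝 c) := by
  have hd : HasDerivAt (fun y : ℝ => 1 - Real.exp (-(c * y))) c 0 := by
    have h1 : HasDerivAt (fun y : ℝ => -(c * y)) (-c) 0 :=
      ((hasDerivAt_id 0).const_mul c).neg.congr_deriv (by ring)
    have h2 := h1.exp
    have h3 := h2.const_sub 1
    simpa using h3
  have hslope := hasDerivAt_iff_tendsto_slope.1 hd
  have hinv : Tendsto (fun x : ℝ => x⁻¹) atTop (𝓝[≠] (0:ℝ)) := by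
    rw [tendsto_nhdsWithin_iff]
    refine ⟨tendsto_inv_atTop_zero, ?_⟩
    filter_upwards [eventually_gt_atTop 0] with x hx
    exact inv_ne_zero hx.ne'
  have hcomp := hslope.comp hinv
  refine hcomp.congr' ?_
  filter_upwards [eventually_gt_atTop (0:ℝ)] with x hx
  have hx0 : x ≠ 0 := hx.ne'
  simp only [Function.comp, slope_def_field]
  simp only [mul_zero, neg_zero, Real.exp_zero, sub_zero, div_eq_mul_inv, inv_inv]
  ring

/-- The empirical generalized loss
`Σ_{i=1}^l β_i^α (1 − (1/N) Σ_{k=1}^N exp(−|e_i(k)|^α / β_i^α))` tends to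
`(1/N) Σ_{i=1}^l Σ_{k=1}^N |e_i(k)|^α` as all bandwidths `β_i → +∞`
(along the product of `atTop` filters). -/
theorem empirical_generalized_loss_tendsto_lmp
    (α : ℝ) (hα : 0 < α) (N l : ℕ) (hN : 0 < N) (hl : 0 < l)
    (e : Fin l → Fin N → ℝ) :
    Tendsto
      (fun β : Fin l → ℝ => ∑ i, (β i) ^ α *
        (1 - (1 / (N : ℝ)) * ∑ k, Real.exp (-(|e i k| ^ α / (β i) ^ α))))
      (Filter.pi fun _ : Fin l => atTop)
      (𝓝 ((1 / (N : ℝ)) * ∑ i, ∑ k, |e i k| ^ α)) := by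
  have hNne : (N : ℝ) ≠ 0 := Nat.cast_ne_zero.2 hN.ne'
  have hper : ∀ i : Fin l,
      Tendsto (fun β : Fin l → ℝ => (β i) ^ α *
        (1 - (1 / (N : ℝ)) * ∑ k, Real.exp (-(|e i k| ^ α / (β i) ^ α))))
      (Filter.pi fun _ : Fin l => atTop)
      (𝓝 ((1 / (N : ℝ)) * ∑ k, |e i k| ^ α)) := by
    intro i
    -- scalar version
    have hg : Tendsto (fun x : ℝ =>
        (1 / (N : ℝ)) * ∑ k, x * (1 - Real.exp (-(|e i k| ^ α / x)))) atTop
        (𝓝 ((1 / (N : ℝ)) * ∑ k, |e i k| ^ α)) := by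
      exact (tendsto_finset_sum Finset.univ
        (fun k _ => key_tendsto (|e i k| ^ α))).const_mul _
    have heval : Tendsto (fun β : Fin l → ℝ => (β i) ^ α)
        (Filter.pi fun _ : Fin l => atTop) atTop :=
      (tendsto_rpow_atTop hα).comp (Filter.tendsto_pi.1 tendsto_id i)
    have hcomp := hg.comp heval
    refine hcomp.congr ?_
    intro β
    simp only [Function.comp]
    simp only [mul_sub, mul_one]
    rw [Finset.sum_sub_distrib, Finset.sum_const, Finset.card_univ, Fintype.card_fin,
      Finset.mul_sum, nsmul_eq_mul, mul_sub]
    rw [Finset.mul_sum]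
    field_simp
    rw [mul_sub, mul_one, Finset.mul_sum]
    simp [mul_div_assoc]
  have hsum := tendsto_finset_sum Finset.univ (fun i (_ : i ∈ Finset.univ) => hper i)
  rw [Finset.mul_sum]
  exact hsum
end

section
/- Let (Ω, 𝔽, ℙ) be a probability space, α > 0, l a positive integer, and 𝒳, 𝒴 : Ω → ℝ^l random vectors such that E|𝒳_i − 𝒴_i|^α < ∞ for each coordinate i. Then Σ_{i=1}^l β_i^α (1 − E[exp(−|𝒳_i − 𝒴_i|^α / β_i^α)]) tends to Σ_{i=1}^l E|𝒳_i − 𝒴_i|^α = E‖𝒳 − 𝒴‖_α^α as all β_i tend to +∞, where ‖z‖_α^α = Σ_i |z_i|^α. -/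
open Filter Real Topology MeasureTheory


lemma key_lemma {Ω : Type*} [MeasureSpace Ω] [IsProbabilityMeasure (volume : Measure Ω)]
    (Z : Ω → ℝ) (hZ : ∀ ω, 0 ≤ Z ω) (hZi : Integrable Z) :
    Tendsto (fun t : ℝ => t * (1 - ∫ ω, Real.exp (-(Z ω / t)))) atTop (𝓝 (∫ ω, Z ω)) := by
  have hmeas : AEStronglyMeasurable Z volume := hZi.aestronglyMeasurable
  -- integrability of exp term
  have hexp_int : ∀ t : ℝ, 0 < t → Integrable (fun ω => Real.exp (-(Z ω / t))) := by
    intro t ht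
    refine (integrable_const 1).mono' ?_ ?_
    · exact (Real.continuous_exp.comp (continuous_neg.comp (continuous_id.div_const t))).comp_aestronglyMeasurable hmeas
    · filter_upwards with ω
      rw [Real.norm_eq_abs, abs_of_nonneg (Real.exp_pos _).le]
      exact Real.exp_le_one_iff.mpr (neg_nonpos.mpr (div_nonneg (hZ ω) ht.le))
  have hmeasF : ∀ t : ℝ, AEStronglyMeasurable (fun ω => t * (1 - Real.exp (-(Z ω / t)))) volume := by
    intro t
    have : AEStronglyMeasurable (fun ω => Real.exp (-(Z ω / t))) volume :=
      (Real.continuous_exp.comp (continuous_neg.comp (continuous_id.div_const t))).comp_aestronglyMeasurable hmeas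
    exact (aestronglyMeasurable_const.sub this).const_mul t
  -- dominated convergence
  have hDC : Tendsto (fun t : ℝ => ∫ ω, t * (1 - Real.exp (-(Z ω / t)))) atTop (𝓝 (∫ ω, Z ω)) := by
    apply tendsto_integral_filter_of_dominated_convergence Z
    · exact Eventually.of_forall hmeasF
    · filter_upwards [eventually_gt_atTop (0:ℝ)] with t ht
      filter_upwards with ω
      have h1 : Real.exp (-(Z ω / t)) ≤ 1 := Real.exp_le_one_iff.mpr (neg_nonpos.mpr (div_nonneg (hZ ω) ht.le))
      have h2 : 1 - Z ω / t ≤ Real.exp (-(Z ω / t)) := by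
        have := Real.add_one_le_exp (-(Z ω / t)); linarith
      rw [Real.norm_eq_abs, abs_of_nonneg (by nlinarith)]
      have : 1 - Real.exp (-(Z ω / t)) ≤ Z ω / t := by linarith
      calc t * (1 - Real.exp (-(Z ω / t))) ≤ t * (Z ω / t) := by nlinarith
        _ = Z ω := by field_simp
    · exact hZi
    · filter_upwards with ω
      rcases eq_or_lt_of_le (hZ ω) with h0 | hpos
      · simp [← h0]
      · -- Z ω > 0 case
        have hd : HasDerivAt (fun u : ℝ => 1 - Real.exp (-u)) 1 0 := by
          have : HasDerivAt (fun u : ℝ => Real.exp (-u)) (-1) 0 := by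
            simpa [Function.comp_def] using (Real.hasDerivAt_exp (-0)).comp 0 (hasDerivAt_neg 0)
          simpa [Pi.sub_def] using (hasDerivAt_const (0:ℝ) 1).sub this
        have hslope : Tendsto (fun u : ℝ => (1 - Real.exp (-u)) / u) (𝓝[≠] 0) (𝓝 1) := by
          have h := hasDerivAt_iff_tendsto_slope.mp hd
          refine h.congr' ?_
          filter_upwards [self_mem_nhdsWithin] with u hu
          simp [slope, sub_zero]; ring
        have hu : Tendsto (fun t : ℝ => Z ω / t) atTop (𝓝[≠] 0) := by
          apply tendsto_nhdsWithin_of_tendsto_nhds_of_eventually_within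
          · exact tendsto_const_nhds.div_atTop tendsto_id
          · filter_upwards [eventually_gt_atTop (0:ℝ)] with t ht
            exact (div_pos hpos ht).ne'
        have : Tendsto (fun t : ℝ => Z ω * ((1 - Real.exp (-(Z ω / t))) / (Z ω / t))) atTop
            (𝓝 (Z ω * 1)) := (hslope.comp hu).const_mul (Z ω)
        rw [mul_one] at this
        refine this.congr' ?_
        filter_upwards [eventually_gt_atTop (0:ℝ)] with t ht
        field_simp
  refine hDC.congr' ?_
  filter_upwards [eventually_gt_atTop (0:ℝ)] with t ht
  rw [integral_const_mul]
  congr 1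
  rw [integral_sub (integrable_const 1) (hexp_int t ht), integral_const]
  simp


/-- For random vectors `𝒳, 𝒴 : Ω → ℝ^l` on a probability space with
`E|𝒳_i − 𝒴_i|^α < ∞` for every coordinate, the generalized loss
`Σ_{i=1}^l β_i^α (1 − E[exp(−|𝒳_i − 𝒴_i|^α / β_i^α)])` tends to
`Σ_{i=1}^l E|𝒳_i − 𝒴_i|^α = E‖𝒳 − 𝒴‖_α^α` as all `β_i → +∞`. -/
theorem generalized_loss_tendsto_alpha_moment
    {Ω : Type*} [MeasureSpace Ω] [IsProbabilityMeasure (volume : Measure Ω)]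
    (α : ℝ) (hα : 0 < α) (l : ℕ) (hl : 0 < l)
    (X Y : Ω → Fin l → ℝ)
    (hint : ∀ i, Integrable (fun ω => |X ω i - Y ω i| ^ α)) :
    Tendsto
      (fun β : Fin l → ℝ => ∑ i, (β i) ^ α *
        (1 - ∫ ω, Real.exp (-(|X ω i - Y ω i| ^ α / (β i) ^ α))))
      (Filter.pi fun _ : Fin l => atTop)
      (𝓝 (∑ i, ∫ ω, |X ω i - Y ω i| ^ α)) ∧
    (∑ i, ∫ ω, |X ω i - Y ω i| ^ α) = ∫ ω, ∑ i, |X ω i - Y ω i| ^ α := by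
  constructor
  · apply tendsto_finset_sum
    intro i _
    have hkey := key_lemma (fun ω => |X ω i - Y ω i| ^ α)
      (fun ω => Real.rpow_nonneg (abs_nonneg _) α) (hint i)
    exact hkey.comp ((tendsto_rpow_atTop hα).comp (Filter.tendsto_eval_pi _ i))
  · exact (integral_finset_sum Finset.univ (fun i _ => hint i)).symm
end

section
/- For every α with 0 < α ≤ 2 and every β > 0, the kernel κ(u,v) = exp(−|u − v|^α / β^α) on ℝ is positive semidefinite: for every positive integer N, all real numbers u_1,…,u_N, and all real coefficients c_1,…,c_N, one has Σ_{j=1}^N Σ_{k=1}^N c_j c_k exp(−|u_j − u_k|^α / β^α) ≥ 0. -/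
open Real MeasureTheory Set Filter intervalIntegral

def IsPD (φ : ℝ → ℝ) : Prop :=
  ∀ (N : ℕ) (u c : Fin N → ℝ), 0 ≤ ∑ j, ∑ k, c j * c k * φ (u j - u k)

lemma pd_cos (l : ℝ) : IsPD (fun t => Real.cos (l * t)) := by
  intro N u c
  have key : ∀ j k : Fin N, c j * c k * Real.cos (l * (u j - u k)) =
      (c j * Real.cos (l * u j)) * (c k * Real.cos (l * u k)) +
      (c j * Real.sin (l * u j)) * (c k * Real.sin (l * u k)) := by
    intro j k
    rw [mul_sub, Real.cos_sub]
    ring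
  calc (0:ℝ) ≤ (∑ j, c j * Real.cos (l * u j)) ^ 2 + (∑ j, c j * Real.sin (l * u j)) ^ 2 := by
        positivity
    _ = ∑ j, ∑ k, c j * c k * Real.cos (l * (u j - u k)) := by
        simp_rw [key, Finset.sum_add_distrib, sq, Finset.sum_mul_sum]

lemma pd_smul {φ : ℝ → ℝ} (a : ℝ) (ha : 0 ≤ a) (h : IsPD φ) : IsPD (fun t => a * φ t) := by
  intro N u c
  have := h N u c
  have : 0 ≤ a * ∑ j, ∑ k, c j * c k * φ (u j - u k) := mul_nonneg ha this
  calc (0:ℝ) ≤ a * ∑ j, ∑ k, c j * c k * φ (u j - u k) := this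
    _ = ∑ j, ∑ k, c j * c k * (a * φ (u j - u k)) := by
        simp_rw [Finset.mul_sum]; congr 1; ext j; congr 1; ext k; ring

lemma pd_mul {φ ψ : ℝ → ℝ} (hφ : IsPD φ) (hφe : ∀ t, φ (-t) = φ t) (hψ : IsPD ψ) :
    IsPD (fun t => φ t * ψ t) := by
  intro N u c
  classical
  set A : Matrix (Fin N) (Fin N) ℝ := Matrix.of (fun j k => φ (u j - u k)) with hA
  have hAps : A.PosSemidef := by
    rw [Matrix.posSemidef_iff_dotProduct_mulVec]
    constructor
    · ext j k
      simp only [Matrix.conjTranspose_apply, hA, Matrix.of_apply, star_trivial]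
      rw [← hφe (u j - u k)]; ring_nf
    · intro x
      have h0 := hφ N u x
      have : ∀ j k : Fin N, x j * x k * φ (u j - u k) = x j * (A j k * x k) := by
        intro j k; simp only [hA, Matrix.of_apply]; ring
      simp_rw [this] at h0
      simpa [dotProduct, Matrix.mulVec, Finset.mul_sum] using h0
  obtain ⟨_, P, hP⟩ : ∃ m, ∃ P : Matrix (Fin m) (Fin N) ℝ, A = P.conjTranspose * P := by
    obtain ⟨m, v, hv⟩ := Matrix.posSemidef_iff_eq_sum_vecMulVec.mp hAps
    refine ⟨m, Matrix.of v, ?_⟩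
    rw [hv]; ext j k
    simp [Matrix.mul_apply, Matrix.vecMulVec_apply, Matrix.sum_apply]
  have hMentry : ∀ j k, φ (u j - u k) = ∑ i, P i j * P i k := by
    intro j k
    have h1 : A j k = (P.conjTranspose * P) j k := by rw [← hP]
    simpa [hA, Matrix.mul_apply, Matrix.conjTranspose_apply] using h1
  show 0 ≤ ∑ j, ∑ k, c j * c k * (φ (u j - u k) * ψ (u j - u k))
  calc (0:ℝ) ≤ ∑ i, ∑ j, ∑ k, (c j * P i j) * (c k * P i k) * ψ (u j - u k) := by
        apply Finset.sum_nonneg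
        intro i _
        exact hψ N u (fun j => c j * P i j)
    _ = ∑ j, ∑ k, c j * c k * (φ (u j - u k) * ψ (u j - u k)) := by
        rw [Finset.sum_comm]
        congr 1; ext j
        rw [Finset.sum_comm]
        congr 1; ext k
        rw [hMentry j k, Finset.sum_mul, Finset.mul_sum]
        congr 1; ext i
        ring


lemma pd_congr {φ ψ : ℝ → ℝ} (h : IsPD φ) (he : ∀ t, φ t = ψ t) : IsPD ψ := by
  have : φ = ψ := funext he
  rwa [this] at h

lemma pd_one : IsPD (fun _ => (1:ℝ)) :=
  pd_congr (pd_cos 0) (fun t => by simp)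

lemma pd_pow {φ : ℝ → ℝ} (h : IsPD φ) (he : ∀ t, φ (-t) = φ t) (n : ℕ) :
    IsPD (fun t => φ t ^ n) := by
  induction n with
  | zero => exact pd_congr pd_one (fun t => by simp)
  | succ n ih => exact pd_congr (pd_mul h he ih) (fun t => by rw [← pow_succ'])

lemma real_exp_tsum (x : ℝ) : Real.exp x = ∑' n : ℕ, x ^ n / (Nat.factorial n) := by
  rw [Real.exp_eq_exp_ℝ, NormedSpace.exp_eq_tsum_div]

lemma pd_exp {φ : ℝ → ℝ} (h : IsPD φ) (he : ∀ t, φ (-t) = φ t) :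
    IsPD (fun t => Real.exp (φ t)) := by
  intro N u c
  have key : ∀ j k : Fin N, c j * c k * Real.exp (φ (u j - u k)) =
      ∑' n : ℕ, c j * c k * (φ (u j - u k) ^ n / (Nat.factorial n)) := by
    intro j k
    rw [real_exp_tsum, ← tsum_mul_left]
  calc (0:ℝ) ≤ ∑' n : ℕ, ∑ j, ∑ k, c j * c k * (φ (u j - u k) ^ n / (Nat.factorial n)) := by
        apply tsum_nonneg
        intro n
        have h1 : ∀ j k : Fin N, c j * c k * (φ (u j - u k) ^ n / (Nat.factorial n)) =
            (((Nat.factorial n): ℝ)⁻¹) * (c j * c k * φ (u j - u k) ^ n) := by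
          intro j k; field_simp
        simp_rw [h1, ← Finset.mul_sum]
        exact mul_nonneg (by positivity) (pd_pow h he n N u c)
    _ = ∑ j, ∑ k, ∑' n : ℕ, c j * c k * (φ (u j - u k) ^ n / (Nat.factorial n)) := by
        rw [Summable.tsum_finsetSum]
        · congr 1; ext j
          rw [Summable.tsum_finsetSum]
          intro k _
          exact ((Real.summable_pow_div_factorial (φ (u j - u k))).mul_left _)
        · intro j _
          apply summable_sum
          intro k _
          exact ((Real.summable_pow_div_factorial (φ (u j - u k))).mul_left _)
    _ = ∑ j, ∑ k, c j * c k * Real.exp (φ (u j - u k)) := by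
        simp_rw [key]

lemma pd_limit {φ : ℕ → ℝ → ℝ} {ψ : ℝ → ℝ} (h : ∀ n, IsPD (φ n))
    (hlim : ∀ t, Tendsto (fun n => φ n t) atTop (nhds (ψ t))) : IsPD ψ := by
  intro N u c
  have : Tendsto (fun n => ∑ j, ∑ k, c j * c k * φ n (u j - u k)) atTop
      (nhds (∑ j, ∑ k, c j * c k * ψ (u j - u k))) := by
    apply tendsto_finset_sum
    intro j _
    apply tendsto_finset_sum
    intro k _
    exact (hlim (u j - u k)).const_mul _
  exact ge_of_tendsto' this (fun n => h n N u c)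


section Stable
variable {α : ℝ} (hα : 0 < α) (hα2 : α < 2)

noncomputable def F (α t s : ℝ) : ℝ := (1 - Real.cos (t * s)) * s ^ (-1 - α)

include hα in
lemma w_integrableOn_Ioi {ε : ℝ} (hε : 0 < ε) :
    IntegrableOn (fun s => s ^ (-1 - α)) (Ioi ε) := by
  exact integrableOn_Ioi_rpow_of_lt (by linarith) hε

lemma F_contOn (t : ℝ) : ContinuousOn (F α t) (Ioi 0) := by
  apply ContinuousOn.mul
  · exact (continuous_const.sub (Real.continuous_cos.comp (continuous_const.mul continuous_id))).continuousOn
  · exact ContinuousOn.rpow_const continuousOn_id (fun x hx => Or.inl (ne_of_gt hx))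

lemma F_nonneg {t s : ℝ} (hs : 0 < s) : 0 ≤ F α t s :=
  mul_nonneg (by simp [Real.cos_le_one]) (Real.rpow_nonneg hs.le _)

lemma F_le_quad {t s : ℝ} (hs : 0 < s) : F α t s ≤ t ^ 2 / 2 * s ^ (1 - α) := by
  have h1 : 1 - Real.cos (t * s) ≤ (t * s) ^ 2 / 2 := by
    have := Real.one_sub_sq_div_two_le_cos (x := t * s)
    linarith
  have h2 : s ^ (1 - α) = s ^ (2 : ℝ) * s ^ (-1 - α) := by
    rw [← Real.rpow_add hs]; congr 1; ring
  have h3 : s ^ (2 : ℝ) = s ^ 2 := by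
    rw [show (2:ℝ) = ((2:ℕ):ℝ) by norm_num, Real.rpow_natCast]
  calc F α t s ≤ ((t * s) ^ 2 / 2) * s ^ (-1 - α) := by
        apply mul_le_mul_of_nonneg_right h1 (Real.rpow_nonneg hs.le _)
    _ = t ^ 2 / 2 * s ^ (1 - α) := by
        rw [h2, h3]; ring

lemma F_le_two_w {t s : ℝ} (hs : 0 < s) : F α t s ≤ 2 * s ^ (-1 - α) := by
  have h1 : 1 - Real.cos (t * s) ≤ 2 := by
    have := Real.neg_one_le_cos (t * s)
    linarith
  exact mul_le_mul_of_nonneg_right h1 (Real.rpow_nonneg hs.le _)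

include hα2 in
lemma F_integrableOn_Ioc (t : ℝ) {ε : ℝ} (hε : 0 < ε) :
    IntegrableOn (F α t) (Ioc 0 ε) := by
  apply Integrable.mono' (g := fun s => t ^ 2 / 2 * s ^ (1 - α))
  · exact ((intervalIntegrable_rpow' (by linarith : (-1:ℝ) < 1 - α) (a := 0) (b := ε)).1.const_mul _)
  · exact ((F_contOn t).mono Ioc_subset_Ioi_self).aestronglyMeasurable measurableSet_Ioc
  · filter_upwards [ae_restrict_mem measurableSet_Ioc] with s hs
    rw [Real.norm_eq_abs, abs_of_nonneg (F_nonneg hs.1)]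
    exact F_le_quad hs.1

include hα in
lemma F_integrableOn_Ioi' (t : ℝ) {ε : ℝ} (hε : 0 < ε) :
    IntegrableOn (F α t) (Ioi ε) := by
  apply Integrable.mono' (g := fun s => 2 * s ^ (-1 - α))
  · exact (w_integrableOn_Ioi hα hε).const_mul _
  · exact ((F_contOn t).mono (Ioi_subset_Ioi hε.le)).aestronglyMeasurable measurableSet_Ioi
  · filter_upwards [ae_restrict_mem measurableSet_Ioi] with s hs
    have hs0 : 0 < s := lt_trans hε hs
    rw [Real.norm_eq_abs, abs_of_nonneg (F_nonneg hs0)]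
    exact F_le_two_w hs0

include hα hα2 in
lemma F_integrableOn_Ioi0 (t : ℝ) : IntegrableOn (F α t) (Ioi 0) := by
  rw [← Ioc_union_Ioi_eq_Ioi (zero_le_one)]
  exact (F_integrableOn_Ioc hα2 t zero_lt_one).union (F_integrableOn_Ioi' hα t zero_lt_one)

end Stable

noncomputable def Kc (α : ℝ) : ℝ := ∫ s in Ioi (0:ℝ), F α 1 s

section Stable
variable {α : ℝ} (hα : 0 < α) (hα2 : α < 2)

include hα hα2 in
lemma F_integral_eq (t : ℝ) :
    ∫ s in Ioi (0:ℝ), F α t s = |t| ^ α * Kc α := by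
  rcases eq_or_ne t 0 with rfl | ht
  · simp [F, Real.zero_rpow hα.ne', abs_zero]
  · have hb : 0 < |t| := abs_pos.mpr ht
    have step1 : ∫ s in Ioi (0:ℝ), F α t s = ∫ s in Ioi (0:ℝ), F α |t| s := by
      apply setIntegral_congr_fun measurableSet_Ioi
      intro s hs
      simp only [F]
      rw [← Real.cos_abs (t * s), abs_mul, abs_of_pos (mem_Ioi.mp hs)]
    have step2 : ∀ s ∈ Ioi (0:ℝ), F α |t| s = |t| ^ (1 + α) * F α 1 (|t| * s) := by
      intro s hs
      have hs0 : (0:ℝ) < s := mem_Ioi.mp hs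
      have hcancel : |t| ^ (1 + α) * |t| ^ (-1 - α) = 1 := by
        rw [← Real.rpow_add hb]; norm_num
      simp only [F, one_mul]
      rw [Real.mul_rpow hb.le hs0.le,
        show |t| ^ (1 + α) * ((1 - Real.cos (|t| * s)) * (|t| ^ (-1 - α) * s ^ (-1 - α)))
          = (|t| ^ (1 + α) * |t| ^ (-1 - α)) * ((1 - Real.cos (|t| * s)) * s ^ (-1 - α)) from by
            ring, hcancel, one_mul]
    have step3 : ∫ s in Ioi (0:ℝ), F α |t| s
        = |t| ^ (1 + α) * ∫ s in Ioi (0:ℝ), F α 1 (|t| * s) := by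
      rw [← MeasureTheory.integral_const_mul]
      exact setIntegral_congr_fun measurableSet_Ioi step2
    have step4 : ∫ s in Ioi (0:ℝ), F α 1 (|t| * s) = |t|⁻¹ * Kc α := by
      have := integral_comp_mul_left_Ioi (F α 1) 0 hb
      rw [mul_zero] at this
      rw [this, smul_eq_mul, Kc]
    rw [step1, step3, step4, ← mul_assoc]
    congr 1
    rw [← Real.rpow_neg_one |t|, ← Real.rpow_add hb]
    congr 1; ring

include hα hα2 in
lemma Kc_pos : 0 < Kc α := by
  rw [Kc, show (0:ℝ) < ∫ s in Ioi (0:ℝ), F α 1 s ↔ _ from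
    setIntegral_pos_iff_support_of_nonneg_ae ?_ (F_integrableOn_Ioi0 hα hα2 1)]
  · apply lt_of_lt_of_le (b := volume (Ioo (π/2) π))
    · rw [Real.volume_Ioo]
      apply ENNReal.ofReal_pos.mpr
      linarith [Real.pi_pos]
    · apply measure_mono
      intro s hs
      have h1 : 0 < s := lt_trans (by positivity) hs.1
      constructor
      · simp only [Function.mem_support, F, one_mul]
        have hcos : Real.cos s ≤ 0 :=
          Real.cos_nonpos_of_pi_div_two_le_of_le hs.1.le (by linarith [hs.2])
        have : (0:ℝ) < (1 - Real.cos s) * s ^ (-1 - α) := by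
          apply mul_pos (by linarith) (Real.rpow_pos_of_pos h1 _)
        exact ne_of_gt this
      · exact h1
  · filter_upwards [ae_restrict_mem measurableSet_Ioi] with s hs
    exact F_nonneg hs

end Stable

section Stable
variable {α : ℝ} (hα : 0 < α) (hα2 : α < 2)

noncomputable def gtr (α ε t : ℝ) : ℝ := ∫ s in Ioi ε, Real.cos (s * t) * s ^ (-1 - α)
noncomputable def Wtr (α ε : ℝ) : ℝ := ∫ s in Ioi ε, s ^ (-1 - α)

include hα in
lemma cosw_integrableOn {ε : ℝ} (hε : 0 < ε) (t : ℝ) :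
    IntegrableOn (fun s => Real.cos (s * t) * s ^ (-1 - α)) (Ioi ε) := by
  apply Integrable.mono' (w_integrableOn_Ioi hα hε)
  · apply ContinuousOn.aestronglyMeasurable _ measurableSet_Ioi
    apply ContinuousOn.mul
    · exact (Real.continuous_cos.comp (continuous_id.mul continuous_const)).continuousOn
    · exact ContinuousOn.rpow_const continuousOn_id
        (fun x hx => Or.inl (ne_of_gt (lt_trans hε hx)))
  · filter_upwards [ae_restrict_mem measurableSet_Ioi] with s hs
    have hs0 : 0 < s := lt_trans hε hs
    rw [Real.norm_eq_abs, abs_mul, abs_of_nonneg (Real.rpow_nonneg hs0.le _)]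
    calc |Real.cos (s * t)| * s ^ (-1 - α) ≤ 1 * s ^ (-1 - α) :=
          mul_le_mul_of_nonneg_right (Real.abs_cos_le_one _) (Real.rpow_nonneg hs0.le _)
      _ = s ^ (-1 - α) := one_mul _

include hα in
lemma g_pd {ε : ℝ} (hε : 0 < ε) : IsPD (gtr α ε) := by
  intro N u c
  have inner : ∀ j k : Fin N, Integrable
      (fun s => c j * c k * (Real.cos (s * (u j - u k)) * s ^ (-1 - α)))
      (volume.restrict (Ioi ε)) :=
    fun j k => ((cosw_integrableOn hα hε (u j - u k)).const_mul _)
  have key : ∑ j, ∑ k, c j * c k * gtr α ε (u j - u k) =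
      ∫ s in Ioi ε, ∑ j, ∑ k, c j * c k * (Real.cos (s * (u j - u k)) * s ^ (-1 - α)) := by
    rw [MeasureTheory.integral_finset_sum _
      (fun j _ => integrable_finset_sum _ (fun k _ => inner j k))]
    congr 1; ext j
    rw [MeasureTheory.integral_finset_sum _ (fun k _ => inner j k)]
    congr 1; ext k
    simp only [gtr]
    rw [← MeasureTheory.integral_const_mul]
  rw [key]
  apply setIntegral_nonneg measurableSet_Ioi
  intro s hs
  have hs0 : 0 < s := lt_trans hε hs
  have h1 : ∀ j k : Fin N, c j * c k * (Real.cos (s * (u j - u k)) * s ^ (-1 - α)) =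
      (c j * c k * Real.cos (s * (u j - u k))) * s ^ (-1 - α) := by
    intro j k; ring
  simp_rw [h1, ← Finset.sum_mul]
  exact mul_nonneg (pd_cos s N u c) (Real.rpow_nonneg hs0.le _)

lemma g_even {ε : ℝ} (t : ℝ) : gtr α ε (-t) = gtr α ε t := by
  unfold gtr
  congr 1; ext s
  rw [mul_neg, Real.cos_neg]

include hα hα2 in
lemma trunc_eq {ε : ℝ} (hε : 0 < ε) (t : ℝ) :
    ∫ s in Ioi ε, F α t s = Wtr α ε - gtr α ε t := by
  have h1 : ∀ s ∈ Ioi ε, F α t s = s ^ (-1 - α) - Real.cos (s * t) * s ^ (-1 - α) := by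
    intro s _
    rw [F, sub_mul, one_mul, mul_comm t s]
  rw [setIntegral_congr_fun measurableSet_Ioi h1,
    integral_sub (w_integrableOn_Ioi hα hε) (cosw_integrableOn hα hε t)]
  rfl

include hα hα2 in
lemma split_eq {ε : ℝ} (hε : 0 < ε) (t : ℝ) :
    |t| ^ α * Kc α = (∫ s in Ioc 0 ε, F α t s) + (Wtr α ε - gtr α ε t) := by
  rw [← F_integral_eq hα hα2 t, ← trunc_eq hα hα2 hε t,
    ← setIntegral_union Ioc_disjoint_Ioi_same measurableSet_Ioi
      (F_integrableOn_Ioc hα2 t hε) (F_integrableOn_Ioi' hα t hε),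
    Ioc_union_Ioi_eq_Ioi hε.le]

include hα hα2 in
lemma delta_bound {ε : ℝ} (hε : 0 < ε) (t : ℝ) :
    (0 ≤ ∫ s in Ioc 0 ε, F α t s) ∧
      (∫ s in Ioc 0 ε, F α t s) ≤ t ^ 2 / 2 * (ε ^ (2 - α) / (2 - α)) := by
  constructor
  · apply setIntegral_nonneg measurableSet_Ioc
    intro s hs; exact F_nonneg hs.1
  · have h1 : (∫ s in Ioc 0 ε, F α t s) ≤ ∫ s in Ioc 0 ε, t ^ 2 / 2 * s ^ (1 - α) := by
      apply setIntegral_mono_on (F_integrableOn_Ioc hα2 t hε)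
        (((intervalIntegrable_rpow' (by linarith : (-1:ℝ) < 1 - α) (a := 0) (b := ε)).1.const_mul
          _)) measurableSet_Ioc
      intro s hs; exact F_le_quad hs.1
    have h2 : ∫ s in Ioc 0 ε, t ^ 2 / 2 * s ^ (1 - α)
        = t ^ 2 / 2 * (ε ^ (2 - α) / (2 - α)) := by
      rw [MeasureTheory.integral_const_mul, ← integral_of_le hε.le,
        integral_rpow (Or.inl (by linarith : (-1:ℝ) < 1 - α))]
      rw [Real.zero_rpow (show (1 - α + 1 : ℝ) ≠ 0 from by intro h; linarith),
        show (1 - α + 1) = 2 - α by ring]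
      ring
    linarith
end Stable

lemma tendsto_eps : Tendsto (fun n : ℕ => ((n:ℝ)+1)⁻¹) atTop (nhds 0) := by
  have := tendsto_one_div_add_atTop_nhds_zero_nat (𝕜 := ℝ)
  simpa [one_div] using this

lemma pd_stable {α : ℝ} (hα : 0 < α) (hα2 : α < 2) :
    IsPD (fun t => Real.exp (-(|t| ^ α))) := by
  have hK := Kc_pos hα hα2
  set K := Kc α with hKdef
  set εf : ℕ → ℝ := fun n => ((n:ℝ)+1)⁻¹ with hεf
  have hεpos : ∀ n, 0 < εf n := fun n => by positivity
  apply pd_limit (φ := fun n t => Real.exp (K⁻¹ * (gtr α (εf n) t - Wtr α (εf n))))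
  · intro n
    have h1 : IsPD (fun t => K⁻¹ * gtr α (εf n) t) :=
      pd_smul _ (inv_nonneg.mpr hK.le) (g_pd hα (hεpos n))
    have h2 : IsPD (fun t => Real.exp (K⁻¹ * gtr α (εf n) t)) :=
      pd_exp h1 (fun t => by rw [g_even])
    have h3 := pd_smul (Real.exp (-(K⁻¹ * Wtr α (εf n)))) (Real.exp_nonneg _) h2
    apply pd_congr h3
    intro t
    rw [← Real.exp_add]
    congr 1; ring
  · intro t
    set δ : ℕ → ℝ := fun n => ∫ s in Ioc 0 (εf n), F α t s with hδdef
    have hδ : Tendsto δ atTop (nhds 0) := by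
      apply squeeze_zero (fun n => (delta_bound hα hα2 (hεpos n) t).1)
        (fun n => (delta_bound hα hα2 (hεpos n) t).2)
      have h5 : Tendsto (fun n : ℕ => (εf n) ^ (2 - α)) atTop (nhds 0) := by
        have htop : Tendsto (fun n : ℕ => ((n:ℝ)+1) ^ (2 - α)) atTop atTop :=
          (tendsto_rpow_atTop (by linarith : (0:ℝ) < 2 - α)).comp
            (tendsto_atTop_add_const_right atTop 1 (tendsto_natCast_atTop_atTop (R := ℝ)))
        have h6 : Tendsto (fun n : ℕ => (((n:ℝ)+1) ^ (2 - α))⁻¹) atTop (nhds 0) :=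
          htop.inv_tendsto_atTop
        apply h6.congr
        intro n
        rw [← Real.inv_rpow (by positivity : (0:ℝ) ≤ (n:ℝ)+1)]
      have := (h5.div_const (2 - α)).const_mul (t ^ 2 / 2)
      simpa using this
    have key : ∀ n, Real.exp (K⁻¹ * (gtr α (εf n) t - Wtr α (εf n)))
        = Real.exp (K⁻¹ * δ n - |t| ^ α) := by
      intro n
      congr 1
      have hsplit := split_eq hα hα2 (hεpos n) t
      have : gtr α (εf n) t - Wtr α (εf n) = δ n - |t| ^ α * K := by
        rw [hδdef]; dsimp only; linarith
      rw [this, mul_sub, mul_comm (|t| ^ α) K, ← mul_assoc, inv_mul_cancel₀ hK.ne', one_mul]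
    have hlim2 : Tendsto (fun n => K⁻¹ * δ n - |t| ^ α) atTop (nhds (-(|t| ^ α))) := by
      have := (hδ.const_mul K⁻¹).sub_const (|t| ^ α)
      simpa using this
    have := (Real.continuous_exp.tendsto _).comp hlim2
    apply this.congr
    intro n
    rw [Function.comp_apply, key n]

lemma pd_stable2 {α : ℝ} (hα : 0 < α) (hα2 : α ≤ 2) :
    IsPD (fun t => Real.exp (-(|t| ^ α))) := by
  rcases lt_or_eq_of_le hα2 with h | rfl
  · exact pd_stable hα h
  · have ha1 : ∀ n : ℕ, 0 < 2 - ((n:ℝ)+1)⁻¹ := by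
      intro n
      have h1 : ((n:ℝ)+1)⁻¹ ≤ 1 := by
        rw [inv_le_one_iff₀]; right
        have : (0:ℝ) ≤ (n:ℝ) := n.cast_nonneg
        linarith
      linarith
    have ha2 : ∀ n : ℕ, 2 - ((n:ℝ)+1)⁻¹ < 2 := by
      intro n
      have : 0 < ((n:ℝ)+1)⁻¹ := by positivity
      linarith
    apply pd_limit (φ := fun n t => Real.exp (-(|t| ^ (2 - ((n:ℝ)+1)⁻¹))))
    · exact fun n => pd_stable (ha1 n) (ha2 n)
    · intro t
      have hatend : Tendsto (fun n : ℕ => 2 - ((n:ℝ)+1)⁻¹) atTop (nhds 2) := by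
        have := tendsto_eps.const_sub 2
        simpa using this
      rcases eq_or_ne t 0 with rfl | ht
      · have h0 : ∀ n : ℕ, Real.exp (-(|(0:ℝ)| ^ (2 - ((n:ℝ)+1)⁻¹))) = 1 := by
          intro n
          rw [abs_zero, Real.zero_rpow (ha1 n).ne', neg_zero, Real.exp_zero]
        rw [show Real.exp (-(|(0:ℝ)| ^ (2:ℝ))) = 1 by
          rw [abs_zero, Real.zero_rpow (by norm_num : (2:ℝ) ≠ 0), neg_zero, Real.exp_zero]]
        simp_rw [h0]
        exact tendsto_const_nhds
      · have hb : |t| ≠ 0 := abs_ne_zero.mpr ht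
        have hcont : ContinuousAt (fun y : ℝ => Real.exp (-(|t| ^ y))) 2 := by
          apply ContinuousAt.comp (Real.continuous_exp.continuousAt)
          exact (Real.continuousAt_const_rpow hb).neg
        exact (hcont.tendsto.comp hatend :)


/-- For `0 < α ≤ 2` and `β > 0`, the generalized Gaussian kernel
`κ(u,v) = exp(−|u − v|^α / β^α)` on `ℝ` is positive semidefinite. -/
theorem generalized_gaussian_kernel_posSemidef
    (α β : ℝ) (hα : 0 < α) (hα2 : α ≤ 2) (hβ : 0 < β)
    (N : ℕ) (hN : 0 < N) (u c : Fin N → ℝ) :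
    0 ≤ ∑ j, ∑ k, c j * c k * Real.exp (-(|u j - u k| ^ α / β ^ α)) := by
  have key : ∀ j k : Fin N, |u j - u k| ^ α / β ^ α = |u j / β - u k / β| ^ α := by
    intro j k
    rw [← Real.div_rpow (abs_nonneg _) hβ.le, div_sub_div_same, abs_div, abs_of_pos hβ]
  simp_rw [key]
  exact pd_stable2 hα hα2 N (fun j => u j / β) c
end

section
/- Let 0 < α ≤ 2, let l, N be positive integers, and let β_1,…,β_l > 0. For sample arrays X = (x_i(k)) and Y = (y_i(k)) in ℝ^{l×N} define GCIM(X,Y) = ( Σ_{i=1}^l β_i^α (1 − (1/N) Σ_{k=1}^N exp(−|x_i(k) − y_i(k)|^α / β_i^α)) )^{1/2}. Then GCIM is a metric on ℝ^{l×N}: it is nonnegative, GCIM(X,Y) = 0 if and only if X = Y, GCIM(X,Y) = GCIM(Y,X), and GCIM(X,Z) ≤ GCIM(X,Y) + GCIM(Y,Z) for all X, Y, Z. -/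
set_option maxHeartbeats 1000000
set_option linter.unusedVariables false

open Real


lemma gauss_subadd {u v : ℝ} (hu : 0 ≤ u) (hv : 0 ≤ v) :
    Real.sqrt (1 - Real.exp (-(u+v)^2)) ≤
      Real.sqrt (1 - Real.exp (-u^2)) + Real.sqrt (1 - Real.exp (-v^2)) := by
  set x := Real.exp (-u^2) with hxdef
  set y := Real.exp (-v^2) with hydef
  set E := Real.exp (-(2*(u*v))) with hEdef
  have hx0 : 0 < x := Real.exp_pos _
  have hy0 : 0 < y := Real.exp_pos _
  have hE0 : 0 < E := Real.exp_pos _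
  have hx1 : x ≤ 1 := Real.exp_le_one_iff.mpr (by nlinarith [sq_nonneg u])
  have hy1 : y ≤ 1 := Real.exp_le_one_iff.mpr (by nlinarith [sq_nonneg v])
  have h1x : (0:ℝ) ≤ 1 - x := by linarith
  have h1y : (0:ℝ) ≤ 1 - y := by linarith
  have hsplit : Real.exp (-(u+v)^2) = x * y * E := by
    rw [hxdef, hydef, hEdef, ← Real.exp_add, ← Real.exp_add]
    ring_nf
  rw [hsplit]
  clear_value x y E
  have hstep : Real.sqrt ((Real.sqrt (1-x) + Real.sqrt (1-y))^2)
      = Real.sqrt (1-x) + Real.sqrt (1-y) :=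
    Real.sqrt_sq (by positivity)
  rw [← hstep]
  apply Real.sqrt_le_sqrt
  -- key facts
  have sa : Real.sqrt (1-x) ^ 2 = 1 - x := Real.sq_sqrt h1x
  have sb : Real.sqrt (1-y) ^ 2 = 1 - y := Real.sq_sqrt h1y
  have sqx : Real.sqrt x ^ 2 = x := Real.sq_sqrt hx0.le
  have sqy : Real.sqrt y ^ 2 = y := Real.sq_sqrt hy0.le
  have hE : 1 - E ≤ 2*(u*v) := by
    have := Real.add_one_le_exp (-(2*(u*v)))
    linarith
  have hux : u * Real.sqrt x ≤ Real.sqrt (1-x) := by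
    have hkey : (u * Real.sqrt x)^2 ≤ 1 - x := by
      have h := Real.add_one_le_exp (u^2)
      have h2 : (u^2 + 1) * x ≤ 1 := by
        have := mul_le_mul_of_nonneg_right h hx0.le
        have hh : Real.exp (u^2) * x = 1 := by
          rw [hxdef, ← Real.exp_add, show u^2 + -u^2 = 0 by ring, Real.exp_zero]
        linarith [this, hh]
      have : (u * Real.sqrt x)^2 = u^2 * x := by rw [mul_pow, sqx]
      rw [this]; nlinarith
    calc u * Real.sqrt x = Real.sqrt ((u * Real.sqrt x)^2) :=
          (Real.sqrt_sq (by positivity)).symm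
      _ ≤ Real.sqrt (1-x) := Real.sqrt_le_sqrt hkey
  have hvy : v * Real.sqrt y ≤ Real.sqrt (1-y) := by
    have hkey : (v * Real.sqrt y)^2 ≤ 1 - y := by
      have h := Real.add_one_le_exp (v^2)
      have h2 : (v^2 + 1) * y ≤ 1 := by
        have := mul_le_mul_of_nonneg_right h hy0.le
        have hh : Real.exp (v^2) * y = 1 := by
          rw [hydef, ← Real.exp_add, show v^2 + -v^2 = 0 by ring, Real.exp_zero]
        linarith [this, hh]
      have : (v * Real.sqrt y)^2 = v^2 * y := by rw [mul_pow, sqy]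
      rw [this]; nlinarith
    calc v * Real.sqrt y = Real.sqrt ((v * Real.sqrt y)^2) :=
          (Real.sqrt_sq (by positivity)).symm
      _ ≤ Real.sqrt (1-y) := Real.sqrt_le_sqrt hkey
  have hxy : x * y ≤ Real.sqrt x * Real.sqrt y := by
    have hsx1 : Real.sqrt x ≤ 1 := Real.sqrt_le_one.mpr hx1
    have hsy1 : Real.sqrt y ≤ 1 := Real.sqrt_le_one.mpr hy1
    have hst0 : 0 ≤ Real.sqrt x * Real.sqrt y := by positivity
    have hst1 : Real.sqrt x * Real.sqrt y ≤ 1 := by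
      nlinarith [Real.sqrt_nonneg x, Real.sqrt_nonneg y]
    nlinarith [sqx, sqy, hst0, hst1]
  have step1 : x*y*(1-E) ≤ 2*(u*v)*(x*y) := by
    have := mul_le_mul_of_nonneg_left hE (mul_nonneg hx0.le hy0.le)
    linarith [this]
  have step2 : 2*(u*v)*(x*y) ≤ 2*(u*v)*(Real.sqrt x * Real.sqrt y) :=
    mul_le_mul_of_nonneg_left hxy (by positivity)
  have step3 : 2*(u*v)*(Real.sqrt x * Real.sqrt y)
      ≤ 2*(Real.sqrt (1-x) * Real.sqrt (1-y)) := by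
    have := mul_le_mul hux hvy (by positivity) (Real.sqrt_nonneg _)
    linarith [this]
  have key : x*y*(1-E) ≤ 2*(Real.sqrt (1-x) * Real.sqrt (1-y)) := by linarith
  nlinarith [mul_nonneg h1x h1y, sa, sb, key]

lemma phi_subadd (α : ℝ) (hα : 0 < α) (hα2 : α ≤ 2) {s t : ℝ} (hs : 0 ≤ s) (ht : 0 ≤ t) :
    Real.sqrt (1 - Real.exp (-((s+t) ^ α))) ≤
      Real.sqrt (1 - Real.exp (-(s ^ α))) + Real.sqrt (1 - Real.exp (-(t ^ α))) := by
  set u := s ^ (α/2) with hu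
  set v := t ^ (α/2) with hv
  have hu0 : 0 ≤ u := Real.rpow_nonneg hs _
  have hv0 : 0 ≤ v := Real.rpow_nonneg ht _
  have h1 : u ^ 2 = s ^ α := by
    rw [hu, ← Real.rpow_natCast (s ^ (α/2)) 2, ← Real.rpow_mul hs]
    norm_num
  have h2 : v ^ 2 = t ^ α := by
    rw [hv, ← Real.rpow_natCast (t ^ (α/2)) 2, ← Real.rpow_mul ht]
    norm_num
  have h3 : ((s+t) ^ (α/2)) ^ 2 = (s+t) ^ α := by
    rw [← Real.rpow_natCast ((s+t) ^ (α/2)) 2, ← Real.rpow_mul (by linarith)]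
    norm_num
  have hwuv : (s+t) ^ (α/2) ≤ u + v := by
    have h := NNReal.rpow_add_le_add_rpow s.toNNReal t.toNNReal
      (by positivity : (0:ℝ) ≤ α/2) (by linarith : α/2 ≤ 1)
    rw [← NNReal.coe_le_coe] at h
    push_cast at h
    rwa [Real.coe_toNNReal s hs, Real.coe_toNNReal t ht] at h
  calc Real.sqrt (1 - Real.exp (-((s+t) ^ α)))
      = Real.sqrt (1 - Real.exp (-(((s+t) ^ (α/2)) ^ 2))) := by rw [h3]
    _ ≤ Real.sqrt (1 - Real.exp (-((u+v) ^ 2))) := by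
        apply Real.sqrt_le_sqrt
        have hwp : 0 ≤ (s+t) ^ (α/2) := Real.rpow_nonneg (by linarith) _
        have : ((s+t) ^ (α/2)) ^ 2 ≤ (u+v) ^ 2 := pow_le_pow_left₀ hwp hwuv 2
        have := Real.exp_le_exp.mpr (neg_le_neg this)
        linarith
    _ ≤ Real.sqrt (1 - Real.exp (-(u ^ 2))) + Real.sqrt (1 - Real.exp (-(v ^ 2))) :=
        gauss_subadd hu0 hv0
    _ = Real.sqrt (1 - Real.exp (-(s ^ α))) + Real.sqrt (1 - Real.exp (-(t ^ α))) := by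
        rw [h1, h2]

lemma phi_mono (α : ℝ) (hα : 0 < α) {s t : ℝ} (hs : 0 ≤ s) (hst : s ≤ t) :
    Real.sqrt (1 - Real.exp (-(s ^ α))) ≤ Real.sqrt (1 - Real.exp (-(t ^ α))) := by
  apply Real.sqrt_le_sqrt
  have := Real.exp_le_exp.mpr (neg_le_neg (Real.rpow_le_rpow hs hst hα.le))
  linarith

lemma rho_triangle (α : ℝ) (hα : 0 < α) (hα2 : α ≤ 2) {c βi : ℝ} (hc : 0 ≤ c) (hb : 0 < βi)
    (a b d : ℝ) :
    Real.sqrt (c * (1 - Real.exp (-(|a - d| ^ α / βi ^ α)))) ≤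
      Real.sqrt (c * (1 - Real.exp (-(|a - b| ^ α / βi ^ α)))) +
      Real.sqrt (c * (1 - Real.exp (-(|b - d| ^ α / βi ^ α)))) := by
  have hdiv : ∀ x y : ℝ, |x - y| ^ α / βi ^ α = (|x - y| / βi) ^ α := fun x y =>
    (Real.div_rpow (abs_nonneg _) hb.le α).symm
  simp only [hdiv]
  have hmul : ∀ z : ℝ, Real.sqrt (c * (1 - Real.exp (-(z ^ α))))
      = Real.sqrt c * Real.sqrt (1 - Real.exp (-(z ^ α))) := fun z => Real.sqrt_mul hc _
  rw [hmul, hmul, hmul, ← mul_add]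
  apply mul_le_mul_of_nonneg_left _ (Real.sqrt_nonneg c)
  have htri : |a - d| / βi ≤ |a - b| / βi + |b - d| / βi := by
    rw [← add_div]
    exact div_le_div_of_nonneg_right (abs_sub_le a b d) hb.le
  calc Real.sqrt (1 - Real.exp (-((|a - d| / βi) ^ α)))
      ≤ Real.sqrt (1 - Real.exp (-((|a - b| / βi + |b - d| / βi) ^ α))) :=
        phi_mono α hα (by positivity) htri
    _ ≤ _ := phi_subadd α hα hα2 (by positivity) (by positivity)

lemma l2_triangle {ι : Type*} [Fintype ι] (f g h : ι → ℝ) (hf : ∀ i, 0 ≤ f i)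
    (hg : ∀ i, 0 ≤ g i) (hh : ∀ i, 0 ≤ h i) (htri : ∀ i, f i ≤ g i + h i) :
    Real.sqrt (∑ i, (f i)^2) ≤ Real.sqrt (∑ i, (g i)^2) + Real.sqrt (∑ i, (h i)^2) := by
  have key : ‖(WithLp.equiv 2 (ι → ℝ)).symm (g + h)‖ ≤
      ‖(WithLp.equiv 2 (ι → ℝ)).symm g‖ + ‖(WithLp.equiv 2 (ι → ℝ)).symm h‖ := by
    exact norm_add_le _ _
  rw [EuclideanSpace.norm_eq, EuclideanSpace.norm_eq, EuclideanSpace.norm_eq] at key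
  simp only [WithLp.equiv_symm_apply, PiLp.toLp_apply, Pi.add_apply, Real.norm_eq_abs, sq_abs] at key
  calc Real.sqrt (∑ i, (f i)^2)
      ≤ Real.sqrt (∑ i, (g i + h i)^2) := by
        apply Real.sqrt_le_sqrt
        apply Finset.sum_le_sum
        intro i _
        nlinarith [hf i, hg i, hh i, htri i]
    _ ≤ _ := key

/-- For `0 < α ≤ 2` and bandwidths `β_i > 0`, the correntropy induced
metric `GCIM(X,Y) = (Σ_i β_i^α (1 − (1/N) Σ_k exp(−|x_i(k) − y_i(k)|^α / β_i^α)))^{1/2}`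
is a metric on `ℝ^{l×N}`: nonnegative, vanishing exactly on the diagonal, symmetric,
and satisfying the triangle inequality. -/
theorem gcim_is_metric
    (α : ℝ) (hα : 0 < α) (hα2 : α ≤ 2) (l N : ℕ) (hl : 0 < l) (hN : 0 < N)
    (β : Fin l → ℝ) (hβ : ∀ i, 0 < β i)
    (GCIM : (Fin l → Fin N → ℝ) → (Fin l → Fin N → ℝ) → ℝ)
    (hG : GCIM = fun X Y => Real.sqrt (∑ i, (β i) ^ α *
        (1 - (1 / (N : ℝ)) * ∑ k, Real.exp (-(|X i k - Y i k| ^ α / (β i) ^ α))))) :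
    (∀ X Y, 0 ≤ GCIM X Y) ∧
    (∀ X Y, GCIM X Y = 0 ↔ X = Y) ∧
    (∀ X Y, GCIM X Y = GCIM Y X) ∧
    (∀ X Y Z, GCIM X Z ≤ GCIM X Y + GCIM Y Z) := by
  have hN0 : (N:ℝ) ≠ 0 := Nat.cast_ne_zero.mpr hN.ne'
  have hNpos : (0:ℝ) < N := Nat.cast_pos.mpr hN
  have hcpos : ∀ i, (0:ℝ) < β i ^ α / N :=
    fun i => div_pos (Real.rpow_pos_of_pos (hβ i) α) hNpos
  have hterm_nonneg : ∀ (X Y : Fin l → Fin N → ℝ) (i : Fin l) (k : Fin N),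
      0 ≤ 1 - Real.exp (-(|X i k - Y i k| ^ α / β i ^ α)) := by
    intro X Y i k
    have h2 : 0 ≤ |X i k - Y i k| ^ α / β i ^ α :=
      div_nonneg (Real.rpow_nonneg (abs_nonneg _) _) (Real.rpow_pos_of_pos (hβ i) α).le
    have h1 : Real.exp (-(|X i k - Y i k| ^ α / β i ^ α)) ≤ 1 :=
      Real.exp_le_one_iff.mpr (by linarith)
    linarith
  have hS : ∀ X Y : Fin l → Fin N → ℝ, GCIM X Y =
      Real.sqrt (∑ i, ∑ k, β i ^ α / N * (1 - Real.exp (-(|X i k - Y i k| ^ α / β i ^ α)))) := by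
    intro X Y
    rw [hG]
    simp only
    congr 1
    refine Finset.sum_congr rfl fun i _ => ?_
    rw [← Finset.mul_sum, Finset.sum_sub_distrib, Finset.sum_const, Finset.card_univ,
      Fintype.card_fin, nsmul_eq_mul, mul_one]
    field_simp
  refine ⟨?_, ?_, ?_, ?_⟩
  · intro X Y
    rw [hG]
    exact Real.sqrt_nonneg _
  · intro X Y
    constructor
    · intro h
      rw [hS] at h
      have hnn : ∀ i ∈ (Finset.univ : Finset (Fin l)),
          0 ≤ ∑ k, β i ^ α / N * (1 - Real.exp (-(|X i k - Y i k| ^ α / β i ^ α))) :=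
        fun i _ => Finset.sum_nonneg fun k _ =>
          mul_nonneg (hcpos i).le (hterm_nonneg X Y i k)
      have hsum0 : (∑ i, ∑ k, β i ^ α / N *
          (1 - Real.exp (-(|X i k - Y i k| ^ α / β i ^ α)))) = 0 := by
        have hle := Real.sqrt_eq_zero'.mp h
        have hge := Finset.sum_nonneg hnn
        linarith
      funext i k
      have hi := (Finset.sum_eq_zero_iff_of_nonneg hnn).mp hsum0 i (Finset.mem_univ i)
      have hk := (Finset.sum_eq_zero_iff_of_nonneg (fun k _ =>
        mul_nonneg (hcpos i).le (hterm_nonneg X Y i k))).mp hi k (Finset.mem_univ k)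
      have h1 : 1 - Real.exp (-(|X i k - Y i k| ^ α / β i ^ α)) = 0 := by
        rcases mul_eq_zero.mp hk with hc | ht
        · exact absurd hc (hcpos i).ne'
        · exact ht
      have h2 : Real.exp (-(|X i k - Y i k| ^ α / β i ^ α)) = 1 := by linarith
      have h3 : -(|X i k - Y i k| ^ α / β i ^ α) = 0 :=
        Real.exp_injective (h2.trans Real.exp_zero.symm)
      rw [neg_eq_zero] at h3
      have hb : β i ^ α ≠ 0 := (Real.rpow_pos_of_pos (hβ i) α).ne'
      have h4 : |X i k - Y i k| ^ α = 0 := (div_eq_zero_iff.mp h3).resolve_right hb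
      have h5 : |X i k - Y i k| = 0 :=
        (Real.rpow_eq_zero (abs_nonneg _) hα.ne').mp h4
      exact sub_eq_zero.mp (abs_eq_zero.mp h5)
    · rintro rfl
      rw [hG]
      simp only [sub_self, abs_zero, Real.zero_rpow hα.ne', zero_div, neg_zero,
        Real.exp_zero, Finset.sum_const, Finset.card_univ, Fintype.card_fin,
        nsmul_eq_mul, mul_one, one_div, inv_mul_cancel₀ hN0, sub_self, mul_zero,
        Finset.sum_const_zero, Real.sqrt_zero]
  · intro X Y
    rw [hG]
    simp only [abs_sub_comm]
  · intro X Y Z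
    have hrw : ∀ X Y : Fin l → Fin N → ℝ,
        (∑ p : Fin l × Fin N, (Real.sqrt (β p.1 ^ α / N *
            (1 - Real.exp (-(|X p.1 p.2 - Y p.1 p.2| ^ α / β p.1 ^ α)))))^2)
        = ∑ i, ∑ k, β i ^ α / N * (1 - Real.exp (-(|X i k - Y i k| ^ α / β i ^ α))) := by
      intro X Y
      rw [Fintype.sum_prod_type]
      exact Finset.sum_congr rfl fun i _ => Finset.sum_congr rfl fun k _ =>
        Real.sq_sqrt (mul_nonneg (hcpos i).le (hterm_nonneg X Y i k))
    rw [hS X Z, hS X Y, hS Y Z, ← hrw X Z, ← hrw X Y, ← hrw Y Z]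
    exact l2_triangle _ _ _ (fun p => Real.sqrt_nonneg _) (fun p => Real.sqrt_nonneg _)
      (fun p => Real.sqrt_nonneg _)
      (fun p => rho_triangle α hα hα2 (hcpos p.1).le (hβ p.1)
        (X p.1 p.2) (Y p.1 p.2) (Z p.1 p.2))
end

section
/- Let α > 1 and β_1,…,β_l > 0. Then the generalized loss J_GL(e) = Σ_{i=1}^l β_i^α (1 − exp(−|e_i/β_i|^α)) is convex on the box { e ∈ ℝ^l : |e_i| ≤ ((α−1)/α)^{1/α} β_i for all i }. -/
open Real

/-- The 1D profile `φ u = 1 - exp (-(u ^ α))` is convex on `[0, c]` with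
`c = ((α-1)/α) ^ (1/α)`. -/
lemma phi_convexOn (α : ℝ) (hα : 1 < α) :
    ConvexOn ℝ (Set.Icc (0 : ℝ) (((α - 1) / α) ^ (1 / α)))
      (fun u => 1 - Real.exp (-(u ^ α))) := by
  have hα0 : (0 : ℝ) < α := lt_trans one_pos hα
  set c : ℝ := ((α - 1) / α) ^ (1 / α) with hc
  have hq : (0 : ℝ) < (α - 1) / α := div_pos (sub_pos.2 hα) hα0
  have hcα : c ^ α = (α - 1) / α := by
    rw [hc, ← Real.rpow_mul hq.le, one_div, inv_mul_cancel₀ (ne_of_gt hα0), Real.rpow_one]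
  refine convexOn_of_hasDerivWithinAt2_nonneg (convex_Icc _ _) ?_
    (f' := fun u => α * u ^ (α - 1) * Real.exp (-(u ^ α)))
    (f'' := fun u => α * (α - 1) * u ^ (α - 1 - 1) * Real.exp (-(u ^ α)) +
      α * u ^ (α - 1) * (Real.exp (-(u ^ α)) * -(α * u ^ (α - 1)))) ?_ ?_ ?_
  · -- continuity
    have h1 : Continuous fun u : ℝ => u ^ α := Real.continuous_rpow_const hα0.le
    exact (continuous_const.sub ((h1.neg).rexp)).continuousOn
  · -- first derivative
    intro x hx
    rw [interior_Icc] at hx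
    have hx0 : x ≠ 0 := ne_of_gt hx.1
    have h1 : HasDerivAt (fun u : ℝ => u ^ α) (α * x ^ (α - 1)) x :=
      Real.hasDerivAt_rpow_const (Or.inl hx0)
    have h2 : HasDerivAt (fun u : ℝ => 1 - Real.exp (-(u ^ α)))
        (-(Real.exp (-(x ^ α)) * -(α * x ^ (α - 1)))) x :=
      (h1.neg.exp).const_sub 1
    have h3 : -(Real.exp (-(x ^ α)) * -(α * x ^ (α - 1))) =
        α * x ^ (α - 1) * Real.exp (-(x ^ α)) := by ring
    rw [h3] at h2
    exact h2.hasDerivWithinAt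
  · -- second derivative
    intro x hx
    rw [interior_Icc] at hx
    have hx0 : x ≠ 0 := ne_of_gt hx.1
    have h1 : HasDerivAt (fun u : ℝ => u ^ α) (α * x ^ (α - 1)) x :=
      Real.hasDerivAt_rpow_const (Or.inl hx0)
    have h2 : HasDerivAt (fun u : ℝ => α * u ^ (α - 1)) (α * ((α - 1) * x ^ (α - 1 - 1))) x :=
      (Real.hasDerivAt_rpow_const (p := α - 1) (Or.inl hx0)).const_mul α
    have h3 : HasDerivAt (fun u : ℝ => Real.exp (-(u ^ α)))
        (Real.exp (-(x ^ α)) * -(α * x ^ (α - 1))) x := h1.neg.exp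
    have h4 := h2.mul h3
    have : α * ((α - 1) * x ^ (α - 1 - 1)) * Real.exp (-(x ^ α)) +
        α * x ^ (α - 1) * (Real.exp (-(x ^ α)) * -(α * x ^ (α - 1))) =
        α * (α - 1) * x ^ (α - 1 - 1) * Real.exp (-(x ^ α)) +
        α * x ^ (α - 1) * (Real.exp (-(x ^ α)) * -(α * x ^ (α - 1))) := by ring
    rw [this] at h4
    exact h4.hasDerivWithinAt
  · -- nonnegativity of the second derivative
    intro x hx
    rw [interior_Icc] at hx
    have hx0 : 0 < x := hx.1
    have hxc : x ≤ c := le_of_lt hx.2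
    have hE : 0 < Real.exp (-(x ^ α)) := Real.exp_pos _
    have hsplit : x ^ (α - 1) * x ^ (α - 1) = x ^ (α - 1 - 1) * x ^ α := by
      rw [← Real.rpow_add hx0, ← Real.rpow_add hx0]; ring_nf
    have hkey : α * (α - 1) * x ^ (α - 1 - 1) * Real.exp (-(x ^ α)) +
        α * x ^ (α - 1) * (Real.exp (-(x ^ α)) * -(α * x ^ (α - 1))) =
        α * Real.exp (-(x ^ α)) * x ^ (α - 1 - 1) * ((α - 1) - α * x ^ α) := by
      calc α * (α - 1) * x ^ (α - 1 - 1) * Real.exp (-(x ^ α)) +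
          α * x ^ (α - 1) * (Real.exp (-(x ^ α)) * -(α * x ^ (α - 1)))
          = α * (α - 1) * x ^ (α - 1 - 1) * Real.exp (-(x ^ α)) -
            α * α * Real.exp (-(x ^ α)) * (x ^ (α - 1) * x ^ (α - 1)) := by ring
        _ = α * (α - 1) * x ^ (α - 1 - 1) * Real.exp (-(x ^ α)) -
            α * α * Real.exp (-(x ^ α)) * (x ^ (α - 1 - 1) * x ^ α) := by rw [hsplit]
        _ = α * Real.exp (-(x ^ α)) * x ^ (α - 1 - 1) * ((α - 1) - α * x ^ α) := by ring
    rw [hkey]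
    have hxα : x ^ α ≤ (α - 1) / α := by
      calc x ^ α ≤ c ^ α := Real.rpow_le_rpow hx0.le hxc hα0.le
        _ = (α - 1) / α := hcα
    have h5 : 0 ≤ (α - 1) - α * x ^ α := by
      have h6 : x ^ α * α ≤ α - 1 := (le_div_iff₀ hα0).1 hxα
      linarith
    positivity

/-- For `α > 1` and `β_i > 0`, the generalized loss
`J_GL(e) = Σ_{i=1}^l β_i^α (1 − exp(−|e_i/β_i|^α))` is convex on the box
`{ e ∈ ℝ^l : |e_i| ≤ ((α−1)/α)^{1/α} β_i for all i }`. -/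
theorem generalized_loss_convexOn_box
    (α : ℝ) (hα : 1 < α) (l : ℕ) (β : Fin l → ℝ) (hβ : ∀ i, 0 < β i) :
    ConvexOn ℝ {e : Fin l → ℝ | ∀ i, |e i| ≤ ((α - 1) / α) ^ (1 / α) * β i}
      (fun e => ∑ i, (β i) ^ α * (1 - Real.exp (-(|e i / β i| ^ α)))) := by
  have hα0 : (0 : ℝ) < α := lt_trans one_pos hα
  set c : ℝ := ((α - 1) / α) ^ (1 / α) with hc
  have hc0 : 0 < c := Real.rpow_pos_of_pos (div_pos (sub_pos.2 hα) hα0) _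
  -- the image of Icc (-c) c under abs is Icc 0 c
  have himg : abs '' Set.Icc (-c) c = Set.Icc (0 : ℝ) c := by
    ext y
    constructor
    · rintro ⟨x, hx, rfl⟩
      exact ⟨abs_nonneg x, abs_le.2 ⟨hx.1, hx.2⟩⟩
    · rintro ⟨hy0, hyc⟩
      exact ⟨y, ⟨le_trans (neg_nonpos.2 hc0.le) hy0, hyc⟩, abs_of_nonneg hy0⟩
  -- abs is convex on Icc (-c) c
  have habs : ConvexOn ℝ (Set.Icc (-c) c) (fun x : ℝ => |x|) := by
    refine ⟨convex_Icc _ _, fun x _ y _ a b ha hb _ => ?_⟩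
    calc |a • x + b • y| ≤ |a • x| + |b • y| := abs_add_le _ _
      _ = a • |x| + b • |y| := by
          simp [abs_mul, abs_of_nonneg ha, abs_of_nonneg hb]
  -- monotonicity of φ on Icc 0 c
  have hmono : MonotoneOn (fun u => 1 - Real.exp (-(u ^ α))) (Set.Icc (0 : ℝ) c) := by
    intro x hx y _ hxy
    have h1 : x ^ α ≤ y ^ α := Real.rpow_le_rpow hx.1 hxy hα0.le
    have := Real.exp_le_exp.2 (neg_le_neg h1)
    dsimp only
    linarith
  -- h(t) = 1 - exp(-|t|^α) is convex on Icc (-c) c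
  have hh : ConvexOn ℝ (Set.Icc (-c) c) (fun t : ℝ => 1 - Real.exp (-(|t| ^ α))) := by
    have := ConvexOn.comp (g := fun u => 1 - Real.exp (-(u ^ α)))
      (f := fun x : ℝ => |x|) (s := Set.Icc (-c) c)
      (by rw [himg]; exact phi_convexOn α hα) habs (by rw [himg]; exact hmono)
    exact this
  -- convexity of the box
  have hS : Convex ℝ {e : Fin l → ℝ | ∀ i, |e i| ≤ c * β i} := by
    intro x hx y hy a b ha hb hab
    intro i
    have : |(a • x + b • y) i| ≤ a * |x i| + b * |y i| := by
      simp only [Pi.add_apply, Pi.smul_apply, smul_eq_mul]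
      calc |a * x i + b * y i| ≤ |a * x i| + |b * y i| := abs_add_le _ _
        _ = a * |x i| + b * |y i| := by
            rw [abs_mul, abs_mul, abs_of_nonneg ha, abs_of_nonneg hb]
    calc |(a • x + b • y) i| ≤ a * |x i| + b * |y i| := this
      _ ≤ a * (c * β i) + b * (c * β i) := by
          have h1 := hx i; have h2 := hy i
          have := mul_le_mul_of_nonneg_left h1 ha
          have := mul_le_mul_of_nonneg_left h2 hb
          nlinarith
      _ = c * β i := by rw [← add_mul, hab, one_mul]
  refine ⟨hS, fun x hx y hy a b ha hb hab => ?_⟩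
  simp only [smul_eq_mul, Finset.mul_sum, ← Finset.sum_add_distrib]
  apply Finset.sum_le_sum
  intro i _
  have hβi := hβ i
  have hxin : x i / β i ∈ Set.Icc (-c) c := by
    have : |x i / β i| ≤ c := by
      rw [abs_div, abs_of_pos hβi, div_le_iff₀ hβi]
      exact hx i
    exact abs_le.1 this
  have hyin : y i / β i ∈ Set.Icc (-c) c := by
    have : |y i / β i| ≤ c := by
      rw [abs_div, abs_of_pos hβi, div_le_iff₀ hβi]
      exact hy i
    exact abs_le.1 this
  have hconv := hh.2 hxin hyin ha hb hab
  simp only [smul_eq_mul] at hconv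
  have harg : (a • x + b • y) i / β i = a * (x i / β i) + b * (y i / β i) := by
    simp only [Pi.add_apply, Pi.smul_apply, smul_eq_mul]
    field_simp
  rw [harg]
  have hβpow : 0 ≤ (β i) ^ α := (Real.rpow_pos_of_pos hβi α).le
  calc (β i) ^ α * (1 - Real.exp (-(|a * (x i / β i) + b * (y i / β i)| ^ α)))
      ≤ (β i) ^ α * (a * (1 - Real.exp (-(|x i / β i| ^ α))) +
        b * (1 - Real.exp (-(|y i / β i| ^ α)))) :=
        mul_le_mul_of_nonneg_left hconv hβpow
    _ = a * ((β i) ^ α * (1 - Real.exp (-(|x i / β i| ^ α)))) +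
        b * ((β i) ^ α * (1 - Real.exp (-(|y i / β i| ^ α)))) := by ring
end

section
/- Let α > 1 and β_1,…,β_l > 0, and let J_GL(e) = Σ_{i=1}^l β_i^α (1 − exp(−|e_i/β_i|^α)), which is differentiable on ℝ^l. Then J_GL is invex: there exists a function q : ℝ^l × ℝ^l → ℝ^l such that for all e_1, e_2 ∈ ℝ^l, J_GL(e_2) ≥ J_GL(e_1) + ⟨q(e_1, e_2), ∇J_GL(e_1)⟩, where ∇J_GL(e_1) denotes the gradient of J_GL at e_1. -/
open Real
open scoped RealInnerProductSpace

/-- For `α > 1` and `β_i > 0`, the generalized loss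
`J_GL(e) = Σ_{i=1}^l β_i^α (1 − exp(−|e_i/β_i|^α))` is differentiable on `ℝ^l` and
invex: there is `q : ℝ^l × ℝ^l → ℝ^l` with
`J_GL(e₂) ≥ J_GL(e₁) + ⟨q(e₁,e₂), ∇J_GL(e₁)⟩` for all `e₁, e₂`. -/
theorem generalized_loss_invex
    (α : ℝ) (hα : 1 < α) (l : ℕ) (β : Fin l → ℝ) (hβ : ∀ i, 0 < β i)
    (J : EuclideanSpace ℝ (Fin l) → ℝ)
    (hJ : J = fun e => ∑ i, (β i) ^ α * (1 - Real.exp (-(|e i / β i| ^ α)))) :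
    Differentiable ℝ J ∧
    ∃ q : EuclideanSpace ℝ (Fin l) → EuclideanSpace ℝ (Fin l) → EuclideanSpace ℝ (Fin l),
      ∀ e₁ e₂, J e₂ ≥ J e₁ + ⟪q e₁ e₂, gradient J e₁⟫ := by
  have hα0 : (0:ℝ) < α := lt_trans one_pos hα
  classical
  -- coordinatewise derivative
  set d : Fin l → ℝ → ℝ := fun i t =>
    (β i) ^ α * (Real.exp (-(|t / β i| ^ α)) * (α * |t / β i| ^ (α - 2) * (t / β i) / β i))
    with hdd
  have hderiv : ∀ (i : Fin l) (t : ℝ),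
      HasDerivAt (fun t : ℝ => (β i) ^ α * (1 - Real.exp (-(|t / β i| ^ α)))) (d i t) t := by
    intro i t
    have h1 : HasDerivAt (fun t : ℝ => t / β i) (1 / β i) t := by
      simpa using (hasDerivAt_id t).div_const (β i)
    have h2 := (hasDerivAt_abs_rpow (t / β i) hα).comp t h1
    have h4 := (((h2.neg).exp).const_sub 1).const_mul ((β i) ^ α)
    simp only [Function.comp_def, Pi.neg_apply] at h4
    refine h4.congr_deriv ?_
    simp only [hdd]
    ring
  -- nonvanishing of the derivative off zero
  have hdne : ∀ (i : Fin l) (t : ℝ), t ≠ 0 → d i t ≠ 0 := by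
    intro i t ht
    have hb := hβ i
    have htb : t / β i ≠ 0 := div_ne_zero ht hb.ne'
    have h1 : (0:ℝ) < (β i) ^ α := Real.rpow_pos_of_pos hb α
    have h2 : (0:ℝ) < Real.exp (-(|t / β i| ^ α)) := Real.exp_pos _
    have h3 : (0:ℝ) < |t / β i| ^ (α - 2) :=
      Real.rpow_pos_of_pos (abs_pos.mpr htb) _
    simp only [hdd]
    intro h
    rcases mul_eq_zero.mp h with h | h
    · exact h1.ne' h
    rcases mul_eq_zero.mp h with h | h
    · exact h2.ne' h
    rcases div_eq_zero_iff.mp h with h | h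
    · rcases mul_eq_zero.mp h with h | h
      · rcases mul_eq_zero.mp h with h | h
        · exact hα0.ne' h
        · exact h3.ne' h
      · exact htb h
    · exact hb.ne' h
  -- the fderiv of J
  have hJ' : ∀ e : EuclideanSpace ℝ (Fin l),
      HasFDerivAt J (∑ i, d i (e i) • (EuclideanSpace.proj i : EuclideanSpace ℝ (Fin l) →L[ℝ] ℝ)) e := by
    intro e
    rw [hJ]
    apply HasFDerivAt.fun_sum
    intro i _
    have hp : HasFDerivAt (fun e : EuclideanSpace ℝ (Fin l) => e i)
        (EuclideanSpace.proj i : EuclideanSpace ℝ (Fin l) →L[ℝ] ℝ) e :=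
      (EuclideanSpace.proj i : EuclideanSpace ℝ (Fin l) →L[ℝ] ℝ).hasFDerivAt
    exact (hderiv i (e i)).comp_hasFDerivAt (f := fun e : EuclideanSpace ℝ (Fin l) => e i) e hp
  have hdiff : Differentiable ℝ J := fun e => (hJ' e).differentiableAt
  refine ⟨hdiff, ?_⟩
  refine ⟨fun e₁ e₂ => if gradient J e₁ = 0 then 0 else
    ((J e₂ - J e₁) / ‖gradient J e₁‖ ^ 2) • gradient J e₁, ?_⟩
  intro e₁ e₂
  by_cases hg : gradient J e₁ = 0
  · simp only [hg, if_pos rfl, inner_zero_right, add_zero]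
    -- gradient zero implies fderiv zero, hence e₁ = 0
    have hf0 : fderiv ℝ J e₁ = 0 := by
      have : fderiv ℝ J e₁ = InnerProductSpace.toDual ℝ _ (gradient J e₁) := by
        rw [gradient, LinearIsometryEquiv.apply_symm_apply]
      rw [this, hg, map_zero]
    have he₁ : ∀ i, e₁ i = 0 := by
      intro i
      by_contra h
      have hd0 : fderiv ℝ J e₁ (EuclideanSpace.single i 1) = 0 := by rw [hf0]; rfl
      rw [(hJ' e₁).fderiv] at hd0
      simp only [ContinuousLinearMap.sum_apply, ContinuousLinearMap.smul_apply,
        PiLp.proj_apply, EuclideanSpace.single_apply, smul_eq_mul,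
        mul_ite, mul_one, mul_zero, Finset.sum_ite_eq', Finset.sum_ite_eq, Finset.mem_univ, if_pos] at hd0
      exact hdne i (e₁ i) h hd0
    have hJ1 : J e₁ = 0 := by
      rw [hJ]
      apply Finset.sum_eq_zero
      intro i _
      rw [he₁ i]
      simp [Real.zero_rpow hα0.ne', abs_of_nonneg]
    have hJ2 : 0 ≤ J e₂ := by
      rw [hJ]
      apply Finset.sum_nonneg
      intro i _
      apply mul_nonneg (Real.rpow_nonneg (hβ i).le α)
      have : Real.exp (-(|e₂ i / β i| ^ α)) ≤ 1 :=
        Real.exp_le_one_iff.mpr (neg_nonpos.mpr (Real.rpow_nonneg (abs_nonneg _) α))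
      linarith
    rw [hJ1]; exact hJ2
  · simp only [if_neg hg]
    rw [real_inner_smul_left, real_inner_self_eq_norm_sq]
    have hn : ‖gradient J e₁‖ ^ 2 ≠ 0 := pow_ne_zero 2 (norm_ne_zero_iff.mpr hg)
    rw [div_mul_cancel₀ _ hn]
    linarith [le_refl (J e₂)]
end

section
/- Let B_p ∈ ℝ^{n×n} and B_r ∈ ℝ^{m×m} be invertible, M_p ∈ ℝ^{n×n} and M_r ∈ ℝ^{m×m} symmetric positive definite, C ∈ ℝ^{m×n}, x⁻ ∈ ℝ^n, and y ∈ ℝ^m. Define P̃ = B_p M_p⁻¹ B_pᵀ, R̃ = B_r M_r⁻¹ B_rᵀ, and K̃ = P̃ Cᵀ (C P̃ Cᵀ + R̃)⁻¹. Then (B_p⁻ᵀ M_p B_p⁻¹ + Cᵀ B_r⁻ᵀ M_r B_r⁻¹ C)⁻¹ (B_p⁻ᵀ M_p B_p⁻¹ x⁻ + Cᵀ B_r⁻ᵀ M_r B_r⁻¹ y) = x⁻ + K̃ (y − C x⁻). -/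
open Matrix

/-- If `A` is positive definite and `B` is invertible, then `B * A * Bᵀ` is
positive definite (real case). -/
lemma posDef_mul_mul_transpose_of_isUnit {k : ℕ} {A B : Matrix (Fin k) (Fin k) ℝ}
    (hA : A.PosDef) (hB : IsUnit B) : (B * A * Bᵀ).PosDef := by
  have hBt : IsUnit Bᵀ := by
    rw [Matrix.isUnit_iff_isUnit_det, Matrix.det_transpose,
      ← Matrix.isUnit_iff_isUnit_det]
    exact hB
  refine Matrix.posDef_iff_dotProduct_mulVec.mpr ⟨?_, ?_⟩
  · have hAh : Aᵀ = A := hA.1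
    show (B * A * Bᵀ)ᴴ = B * A * Bᵀ
    simp only [Matrix.conjTranspose_eq_transpose_of_trivial, Matrix.transpose_mul,
      Matrix.transpose_transpose, hAh, Matrix.mul_assoc]
  · intro x hx
    have hx' : Bᵀ *ᵥ x ≠ 0 := by
      intro h
      exact hx ((Matrix.mulVec_injective_iff_isUnit.mpr hBt).eq_iff' (by simp) |>.mp h)
    have e : star x ⬝ᵥ (B * A * Bᵀ) *ᵥ x = star (Bᵀ *ᵥ x) ⬝ᵥ A *ᵥ (Bᵀ *ᵥ x) := by
      simp [← Matrix.mulVec_mulVec, Matrix.dotProduct_mulVec, Matrix.mulVec_transpose,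
        Matrix.mul_assoc]
    rw [e]
    exact hA.dotProduct_mulVec_pos hx'

/-- One step of the fixed-point equation of the GMKMCKF has the
Kalman-type update form: with `P̃ = B_p M_p⁻¹ B_pᵀ`, `R̃ = B_r M_r⁻¹ B_rᵀ`, and
gain `K̃ = P̃ Cᵀ (C P̃ Cᵀ + R̃)⁻¹`, one has
`(B_p⁻ᵀ M_p B_p⁻¹ + Cᵀ B_r⁻ᵀ M_r B_r⁻¹ C)⁻¹ (B_p⁻ᵀ M_p B_p⁻¹ x⁻ + Cᵀ B_r⁻ᵀ M_r B_r⁻¹ y)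
 = x⁻ + K̃ (y − C x⁻)`. -/
theorem gmkmckf_fixed_point_kalman_form
    {m n : ℕ} (Bp : Matrix (Fin n) (Fin n) ℝ) (Br : Matrix (Fin m) (Fin m) ℝ)
    (hBp : IsUnit Bp) (hBr : IsUnit Br)
    (Mp : Matrix (Fin n) (Fin n) ℝ) (Mr : Matrix (Fin m) (Fin m) ℝ)
    (hMp : Mp.PosDef) (hMr : Mr.PosDef)
    (C : Matrix (Fin m) (Fin n) ℝ) (xminus : Fin n → ℝ) (y : Fin m → ℝ)
    (Pt : Matrix (Fin n) (Fin n) ℝ) (hPt : Pt = Bp * Mp⁻¹ * Bpᵀ)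
    (Rt : Matrix (Fin m) (Fin m) ℝ) (hRt : Rt = Br * Mr⁻¹ * Brᵀ)
    (Kt : Matrix (Fin n) (Fin m) ℝ) (hKt : Kt = Pt * Cᵀ * (C * Pt * Cᵀ + Rt)⁻¹) :
    ((Bp⁻¹)ᵀ * Mp * Bp⁻¹ + Cᵀ * (Br⁻¹)ᵀ * Mr * Br⁻¹ * C)⁻¹.mulVec
        (((Bp⁻¹)ᵀ * Mp * Bp⁻¹).mulVec xminus + (Cᵀ * (Br⁻¹)ᵀ * Mr * Br⁻¹).mulVec y)
      = xminus + Kt.mulVec (y - C.mulVec xminus) := by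
  -- positive definiteness of Pt and Rt
  have hPtpd : Pt.PosDef := hPt ▸ posDef_mul_mul_transpose_of_isUnit hMp.inv hBp
  have hRtpd : Rt.PosDef := hRt ▸ posDef_mul_mul_transpose_of_isUnit hMr.inv hBr
  -- inverses
  have hMpd : IsUnit Mp.det := (Matrix.isUnit_iff_isUnit_det Mp).mp hMp.isUnit
  have hMrd : IsUnit Mr.det := (Matrix.isUnit_iff_isUnit_det Mr).mp hMr.isUnit
  have hPinv : Pt⁻¹ = (Bp⁻¹)ᵀ * Mp * Bp⁻¹ := by
    rw [hPt, Matrix.mul_inv_rev, Matrix.mul_inv_rev,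
      Matrix.nonsing_inv_nonsing_inv Mp hMpd, ← Matrix.transpose_nonsing_inv,
      Matrix.mul_assoc]
  have hRinv : Rt⁻¹ = (Br⁻¹)ᵀ * Mr * Br⁻¹ := by
    rw [hRt, Matrix.mul_inv_rev, Matrix.mul_inv_rev,
      Matrix.nonsing_inv_nonsing_inv Mr hMrd, ← Matrix.transpose_nonsing_inv,
      Matrix.mul_assoc]
  have e1 : (Bp⁻¹)ᵀ * Mp * Bp⁻¹ = Pt⁻¹ := hPinv.symm
  have e2 : Cᵀ * (Br⁻¹)ᵀ * Mr * Br⁻¹ = Cᵀ * Rt⁻¹ := by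
    rw [hRinv]; simp only [Matrix.mul_assoc]
  rw [e1, e2]
  set S : Matrix (Fin n) (Fin n) ℝ := Pt⁻¹ + Cᵀ * Rt⁻¹ * C with hS
  -- S is positive definite hence invertible
  have hCR : (Cᵀ * Rt⁻¹ * C).PosSemidef := by
    have h := hRtpd.inv.posSemidef.conjTranspose_mul_mul_same C
    simpa using h
  have hSpd : S.PosDef := hPtpd.inv.add_posSemidef hCR
  have hSd : IsUnit S.det := (Matrix.isUnit_iff_isUnit_det S).mp hSpd.isUnit
  -- the innovation covariance is invertible
  have hGpd : (C * Pt * Cᵀ + Rt).PosDef := by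
    have h := hPtpd.posSemidef.mul_mul_conjTranspose_same C
    simp only [Matrix.conjTranspose_eq_transpose_of_trivial] at h
    exact Matrix.PosDef.posSemidef_add h hRtpd
  have hGd : IsUnit (C * Pt * Cᵀ + Rt).det :=
    (Matrix.isUnit_iff_isUnit_det _).mp hGpd.isUnit
  -- key identity : S * Kt = Cᵀ * Rt⁻¹
  have hSK : S * Kt = Cᵀ * Rt⁻¹ := by
    have h1 : S * (Pt * Cᵀ) = Cᵀ * Rt⁻¹ * (C * Pt * Cᵀ + Rt) := by
      have hP1 : Pt⁻¹ * Pt = 1 :=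
        Matrix.nonsing_inv_mul Pt ((Matrix.isUnit_iff_isUnit_det Pt).mp hPtpd.isUnit)
      have hR1 : Rt⁻¹ * Rt = 1 :=
        Matrix.nonsing_inv_mul Rt ((Matrix.isUnit_iff_isUnit_det Rt).mp hRtpd.isUnit)
      rw [hS]
      rw [Matrix.add_mul, Matrix.mul_add]
      rw [show Pt⁻¹ * (Pt * Cᵀ) = (Pt⁻¹ * Pt) * Cᵀ by simp [Matrix.mul_assoc],
        hP1, Matrix.one_mul]
      rw [show Cᵀ * Rt⁻¹ * Rt = Cᵀ * (Rt⁻¹ * Rt) by simp [Matrix.mul_assoc], hR1,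
        Matrix.mul_one]
      rw [add_comm]
      simp only [Matrix.mul_assoc]
    calc S * Kt = S * (Pt * Cᵀ) * (C * Pt * Cᵀ + Rt)⁻¹ := by
          rw [hKt]; simp only [Matrix.mul_assoc]
      _ = Cᵀ * Rt⁻¹ * ((C * Pt * Cᵀ + Rt) * (C * Pt * Cᵀ + Rt)⁻¹) := by
          rw [h1]; simp only [Matrix.mul_assoc]
      _ = Cᵀ * Rt⁻¹ := by rw [Matrix.mul_nonsing_inv _ hGd, Matrix.mul_one]
  -- now finish: apply S to both sides
  have hmain : S.mulVec (xminus + Kt.mulVec (y - C.mulVec xminus))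
      = Pt⁻¹.mulVec xminus + (Cᵀ * Rt⁻¹).mulVec y := by
    rw [Matrix.mulVec_add, Matrix.mulVec_mulVec, hSK]
    rw [show (y - C.mulVec xminus) = y + (-(C.mulVec xminus)) by abel]
    rw [Matrix.mulVec_add, Matrix.mulVec_neg]
    rw [hS, Matrix.add_mulVec]
    rw [show (Cᵀ * Rt⁻¹ * C).mulVec xminus = (Cᵀ * Rt⁻¹).mulVec (C.mulVec xminus) by
      rw [Matrix.mulVec_mulVec]]
    abel
  calc S⁻¹.mulVec (Pt⁻¹.mulVec xminus + (Cᵀ * Rt⁻¹).mulVec y)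
      = S⁻¹.mulVec (S.mulVec (xminus + Kt.mulVec (y - C.mulVec xminus))) := by rw [hmain]
    _ = xminus + Kt.mulVec (y - C.mulVec xminus) := by
        rw [Matrix.mulVec_mulVec, Matrix.nonsing_inv_mul S hSd, Matrix.one_mulVec]
end

section
/- In the α = 2 fixed-point setup: assume Σ_{i=1}^l w_i w_iᵀ is positive definite, let γ > ξ, let β > 0 satisfy φ(β) ≤ γ, and suppose β_i ≥ β for all i = 1,…,l. Then for every x ∈ ℝ^n with ‖x‖₁ ≤ γ, the matrix R(x) is invertible and ‖f(x)‖₁ ≤ γ. -/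
open Real Matrix Filter Topology

/-- The vector `ℓ¹` norm `‖v‖₁ = Σ_j |v_j|`. -/
noncomputable def vecNorm1 {n : ℕ} (v : Fin n → ℝ) : ℝ := ∑ j, |v j|

/-- The induced matrix `ℓ¹` norm (maximum absolute column sum). -/
noncomputable def matNorm1 {m n : ℕ} (A : Matrix (Fin m) (Fin n) ℝ) : ℝ :=
  ⨆ j, ∑ i, |A i j|

/-- The smallest eigenvalue of a (Hermitian, i.e. real symmetric) matrix. -/
noncomputable def lambdaMin {n : ℕ} (A : Matrix (Fin n) (Fin n) ℝ) : ℝ :=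
  if h : A.IsHermitian then ⨅ i, h.eigenvalues i else 0

section Aux

lemma aux_vecMulVec_mulVec {n : ℕ} (u v y : Fin n → ℝ) :
    vecMulVec u v *ᵥ y = (v ⬝ᵥ y) • u := by
  ext i
  simp only [Matrix.mulVec, vecMulVec_apply, dotProduct, Pi.smul_apply, smul_eq_mul,
    Finset.sum_mul, ← Finset.mul_sum]
  exact Finset.sum_congr rfl fun j _ => by ring

lemma aux_sum_mulVec {n l : ℕ} (M : Fin l → Matrix (Fin n) (Fin n) ℝ) (y : Fin n → ℝ) :
    (∑ i, M i) *ᵥ y = ∑ i, M i *ᵥ y := by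
  ext j
  simp [Matrix.mulVec, dotProduct, Matrix.sum_apply, Finset.sum_apply, Finset.sum_mul]
  rw [Finset.sum_comm]

lemma aux_quadform {n l : ℕ} (a : Fin l → ℝ) (w : Fin l → Fin n → ℝ) (x y : Fin n → ℝ) :
    x ⬝ᵥ (∑ i, a i • vecMulVec (w i) (w i)) *ᵥ y = ∑ i, a i * (w i ⬝ᵥ x) * (w i ⬝ᵥ y) := by
  rw [aux_sum_mulVec]
  rw [show x ⬝ᵥ ∑ i, (a i • vecMulVec (w i) (w i)) *ᵥ y
      = ∑ i, x ⬝ᵥ (a i • vecMulVec (w i) (w i)) *ᵥ y by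
    simp [dotProduct, Finset.mul_sum, Finset.sum_apply]
    exact Finset.sum_comm]
  refine Finset.sum_congr rfl fun i _ => ?_
  rw [Matrix.smul_mulVec, aux_vecMulVec_mulVec, dotProduct_smul, dotProduct_smul]
  simp only [smul_eq_mul, dotProduct_comm x (w i)]
  ring

lemma aux_herm_sum {n l : ℕ} (a : Fin l → ℝ) (w : Fin l → Fin n → ℝ) :
    (∑ i, a i • vecMulVec (w i) (w i)).IsHermitian := by
  unfold Matrix.IsHermitian
  ext i j
  simp [Matrix.conjTranspose_apply, Matrix.sum_apply, vecMulVec_apply, mul_comm, mul_left_comm]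

lemma aux_rayleigh {n : ℕ} {A : Matrix (Fin n) (Fin n) ℝ} (hA : A.IsHermitian)
    (x : Fin n → ℝ) : lambdaMin A * (x ⬝ᵥ x) ≤ x ⬝ᵥ A *ᵥ x := by
  rcases Nat.eq_zero_or_pos n with hn | hn
  · subst hn
    simp [dotProduct, lambdaMin, Real.iInf_of_isEmpty]
  have : Nonempty (Fin n) := ⟨⟨0, hn⟩⟩
  set V : Matrix (Fin n) (Fin n) ℝ := (hA.eigenvectorUnitary : Matrix (Fin n) (Fin n) ℝ) with hV
  set y : Fin n → ℝ := star V *ᵥ x with hy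
  have hunit : V * star V = 1 := (Matrix.mem_unitaryGroup_iff).mp hA.eigenvectorUnitary.2
  have hVt : Vᵀ = star V := by
    rw [Matrix.star_eq_conjTranspose, Matrix.conjTranspose_eq_transpose_of_trivial]
  have hxA : x ⬝ᵥ A *ᵥ x = ∑ i, hA.eigenvalues i * (y i)^2 := by
    conv_lhs => rw [hA.spectral_theorem, Unitary.conjStarAlgAut_apply]
    rw [← Matrix.mulVec_mulVec, ← Matrix.mulVec_mulVec, Matrix.dotProduct_mulVec x V,
      ← Matrix.mulVec_transpose]
    rw [hVt, ← hy]
    simp [dotProduct, Matrix.mulVec_diagonal, pow_two]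
    exact Finset.sum_congr rfl fun i _ => by ring
  have hyx : y ⬝ᵥ y = x ⬝ᵥ x := by
    calc y ⬝ᵥ y = (x ᵥ* V) ⬝ᵥ y := by rw [hy, ← Matrix.mulVec_transpose, hVt]
    _ = x ⬝ᵥ V *ᵥ y := (Matrix.dotProduct_mulVec x V y).symm
    _ = x ⬝ᵥ (V * star V) *ᵥ x := by rw [hy, Matrix.mulVec_mulVec]
    _ = x ⬝ᵥ x := by rw [hunit, Matrix.one_mulVec]
  have hlm : lambdaMin A = ⨅ i, hA.eigenvalues i := by rw [lambdaMin, dif_pos hA]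
  have hle : ∀ i, lambdaMin A ≤ hA.eigenvalues i := fun i => by
    rw [hlm]; exact ciInf_le (Set.Finite.bddBelow (Set.finite_range _)) i
  calc lambdaMin A * (x ⬝ᵥ x) = ∑ i, lambdaMin A * (y i)^2 := by
        rw [← hyx]; simp [dotProduct, Finset.mul_sum, pow_two]
  _ ≤ ∑ i, hA.eigenvalues i * (y i)^2 :=
      Finset.sum_le_sum fun i _ => mul_le_mul_of_nonneg_right (hle i) (sq_nonneg _)
  _ = x ⬝ᵥ A *ᵥ x := hxA.symm

lemma aux_posdef_weighted {n l : ℕ} (a : Fin l → ℝ) (ha : ∀ i, 0 < a i)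
    (w : Fin l → Fin n → ℝ) (hpd : (∑ i, vecMulVec (w i) (w i)).PosDef) :
    (∑ i, a i • vecMulVec (w i) (w i)).PosDef := by
  refine Matrix.PosDef.of_dotProduct_mulVec_pos (aux_herm_sum a w) fun y hy => ?_
  have hsy : star y = y := by funext i; simp
  rw [hsy, aux_quadform]
  have h0 := hpd.dotProduct_mulVec_pos hy
  rw [hsy] at h0
  have h1 : (0:ℝ) < ∑ i, (w i ⬝ᵥ y) * (w i ⬝ᵥ y) := by
    have : (∑ i, vecMulVec (w i) (w i)) = ∑ i, (1:ℝ) • vecMulVec (w i) (w i) := by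
      simp
    rw [this] at h0
    have := aux_quadform (fun _ => (1:ℝ)) w y y
    simp only [one_mul] at this
    rwa [this] at h0
  obtain ⟨j, -, hj⟩ := Finset.exists_lt_of_sum_lt
    (show ∑ _i : Fin l, (0:ℝ) < ∑ i, (w i ⬝ᵥ y) * (w i ⬝ᵥ y) by simpa using h1)
  calc (0:ℝ) < a j * ((w j ⬝ᵥ y) * (w j ⬝ᵥ y)) := mul_pos (ha j) hj
  _ = a j * (w j ⬝ᵥ y) * (w j ⬝ᵥ y) := (mul_assoc _ _ _).symm
  _ ≤ ∑ i, a i * (w i ⬝ᵥ y) * (w i ⬝ᵥ y) :=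
      Finset.single_le_sum (f := fun i => a i * (w i ⬝ᵥ y) * (w i ⬝ᵥ y))
        (fun i _ => by
          rw [mul_assoc]; exact mul_nonneg (ha i).le (mul_self_nonneg _))
        (Finset.mem_univ j)

end Aux

lemma aux_lambdaMin_pos {n : ℕ} (hn : 0 < n) {M : Matrix (Fin n) (Fin n) ℝ}
    (hM : M.PosDef) : 0 < lambdaMin M := by
  have : Nonempty (Fin n) := ⟨⟨0, hn⟩⟩
  rw [lambdaMin, dif_pos hM.1]
  obtain ⟨i0, hi0⟩ := Finite.exists_min hM.1.eigenvalues
  exact lt_of_lt_of_le (hM.eigenvalues_pos i0) (le_ciInf hi0)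

lemma aux_vecNorm1_nonneg {n : ℕ} (v : Fin n → ℝ) : 0 ≤ vecNorm1 v :=
  Finset.sum_nonneg fun _ _ => abs_nonneg _

lemma aux_abs_dot_le {n : ℕ} (w x : Fin n → ℝ) :
    |w ⬝ᵥ x| ≤ vecNorm1 w * vecNorm1 x := by
  calc |w ⬝ᵥ x| ≤ ∑ j, |w j * x j| := Finset.abs_sum_le_sum_abs _ _
  _ = ∑ j, |w j| * |x j| := by simp [abs_mul]
  _ ≤ ∑ j, |w j| * vecNorm1 x := Finset.sum_le_sum fun j _ =>
      mul_le_mul_of_nonneg_left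
        (Finset.single_le_sum (f := fun k => |x k|) (fun k _ => abs_nonneg _)
          (Finset.mem_univ j)) (abs_nonneg _)
  _ = vecNorm1 w * vecNorm1 x := by simp [vecNorm1, Finset.sum_mul]

noncomputable def nu {n : ℕ} (v : Fin n → ℝ) : ℝ := Real.sqrt (v ⬝ᵥ v)

lemma aux_dot_self_nonneg {n : ℕ} (v : Fin n → ℝ) : 0 ≤ v ⬝ᵥ v :=
  Finset.sum_nonneg fun j _ => mul_self_nonneg _

lemma aux_nu_nonneg {n : ℕ} (v : Fin n → ℝ) : 0 ≤ nu v := Real.sqrt_nonneg _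

lemma aux_nu_sq {n : ℕ} (v : Fin n → ℝ) : nu v * nu v = v ⬝ᵥ v :=
  Real.mul_self_sqrt (aux_dot_self_nonneg v)

lemma aux_cs {n : ℕ} (u v : Fin n → ℝ) : u ⬝ᵥ v ≤ nu u * nu v := by
  have := Real.sum_mul_le_sqrt_mul_sqrt Finset.univ u v
  simpa [nu, dotProduct, pow_two] using this

lemma aux_nu_le_norm1 {n : ℕ} (v : Fin n → ℝ) : nu v ≤ vecNorm1 v := by
  rw [nu, show v ⬝ᵥ v = ∑ j, |v j| ^ 2 by simp [dotProduct, pow_two, abs_mul_abs_self]]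
  calc Real.sqrt (∑ j, |v j| ^ 2) ≤ Real.sqrt ((∑ j, |v j|) ^ 2) :=
        Real.sqrt_le_sqrt (Finset.sum_sq_le_sq_sum_of_nonneg fun j _ => abs_nonneg _)
  _ = vecNorm1 v := Real.sqrt_sq (aux_vecNorm1_nonneg v)

lemma aux_norm1_le_nu {n : ℕ} (v : Fin n → ℝ) :
    vecNorm1 v ≤ Real.sqrt n * nu v := by
  have h := Real.sum_mul_le_sqrt_mul_sqrt Finset.univ (fun _ : Fin n => (1:ℝ))
    (fun j => |v j|)
  simp only [one_mul, one_pow, sq_abs] at h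
  calc vecNorm1 v = ∑ j, |v j| := rfl
  _ ≤ Real.sqrt (∑ _j : Fin n, (1:ℝ)) * Real.sqrt (∑ j, v j ^ 2) := by
      simpa using h
  _ = Real.sqrt n * nu v := by
      simp [nu, dotProduct, pow_two]

lemma aux_nu_sum_le {n l : ℕ} (b : Fin l → ℝ) (w : Fin l → Fin n → ℝ) :
    nu (∑ i, b i • w i) ≤ ∑ i, |b i| * nu (w i) := by
  have hnu : ∀ v : Fin n → ℝ, nu v = ‖(WithLp.equiv 2 (Fin n → ℝ)).symm v‖ := by
    intro v
    rw [EuclideanSpace.norm_eq]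
    simp [nu, dotProduct, pow_two, abs_mul_abs_self]
  rw [hnu]
  have hmap : (WithLp.equiv 2 (Fin n → ℝ)).symm (∑ i, b i • w i)
      = ∑ i, b i • (WithLp.equiv 2 (Fin n → ℝ)).symm (w i) := by
    simp only [WithLp.equiv_symm_apply, WithLp.toLp_sum, WithLp.toLp_smul]
  rw [hmap]
  calc ‖∑ i, b i • (WithLp.equiv 2 (Fin n → ℝ)).symm (w i)‖
      ≤ ∑ i, ‖b i • (WithLp.equiv 2 (Fin n → ℝ)).symm (w i)‖ := norm_sum_le _ _
  _ = ∑ i, |b i| * nu (w i) := by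
      refine Finset.sum_congr rfl fun i _ => ?_
      rw [norm_smul, hnu (w i)]
      simp
/-- In the `α = 2` fixed-point setup, if `Σ_i w_i w_iᵀ ≻ 0`, `γ > ξ`,
`φ(β) ≤ γ`, and `β_i ≥ β` for all `i`, then for every `x` with `‖x‖₁ ≤ γ` the matrix
`R(x)` is invertible and `‖f(x)‖₁ ≤ γ`. -/
theorem fixed_point_map_ball_invariance
    {n l : ℕ} (w : Fin l → Fin n → ℝ) (t : Fin l → ℝ)
    (βi : Fin l → ℝ) (hβi : ∀ i, 0 < βi i)
    (hposdef : (∑ i, vecMulVec (w i) (w i)).PosDef)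
    (e : (Fin n → ℝ) → Fin l → ℝ) (he : e = fun x i => t i - w i ⬝ᵥ x)
    (R : (Fin n → ℝ) → Matrix (Fin n) (Fin n) ℝ)
    (hR : R = fun x => ∑ i, Real.exp (-((e x i) ^ 2 / (βi i) ^ 2)) • vecMulVec (w i) (w i))
    (P : (Fin n → ℝ) → (Fin n → ℝ))
    (hP : P = fun x => ∑ i, (Real.exp (-((e x i) ^ 2 / (βi i) ^ 2)) * t i) • w i)
    (f : (Fin n → ℝ) → (Fin n → ℝ)) (hf : f = fun x => (R x)⁻¹.mulVec (P x))
    (ξ : ℝ)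
    (hξ : ξ = Real.sqrt n * (∑ i, vecNorm1 (w i) * |t i|) /
        lambdaMin (∑ i, vecMulVec (w i) (w i)))
    (γ : ℝ) (hγ : ξ < γ)
    (φ : ℝ → ℝ)
    (hφ : φ = fun b => Real.sqrt n * (∑ i, vecNorm1 (w i) * |t i|) /
        lambdaMin (∑ i, Real.exp (-((γ * vecNorm1 (w i) + |t i|) ^ 2 / b ^ 2)) •
          vecMulVec (w i) (w i)))
    (β : ℝ) (hβ : 0 < β) (hφβ : φ β ≤ γ) (hββi : ∀ i, β ≤ βi i) :
    ∀ x : Fin n → ℝ, vecNorm1 x ≤ γ → IsUnit (R x) ∧ vecNorm1 (f x) ≤ γ := by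
  intro x hx
  have hγ0 : 0 ≤ γ := le_trans (aux_vecNorm1_nonneg x) hx
  rcases Nat.eq_zero_or_pos n with hn | hn
  · subst hn
    constructor
    · exact (Matrix.isUnit_iff_isUnit_det _).2 (by simp [Matrix.det_fin_zero])
    · calc vecNorm1 (f x) = 0 := by simp [vecNorm1]
      _ ≤ γ := hγ0
  -- main case
  set g : Fin l → ℝ := fun i => Real.exp (-((e x i) ^ 2 / (βi i) ^ 2)) with hg
  set c : Fin l → ℝ := fun i =>
    Real.exp (-((γ * vecNorm1 (w i) + |t i|) ^ 2 / β ^ 2)) with hc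
  have hg0 : ∀ i, 0 < g i := fun i => Real.exp_pos _
  have hc0 : ∀ i, 0 < c i := fun i => Real.exp_pos _
  have hg1 : ∀ i, g i ≤ 1 := fun i => by
    rw [hg]
    exact Real.exp_le_one_iff.2 (neg_nonpos.2 (div_nonneg (sq_nonneg _) (sq_nonneg _)))
  have hcg : ∀ i, c i ≤ g i := by
    intro i
    rw [hc, hg]
    refine Real.exp_le_exp.2 (neg_le_neg ?_)
    have hB : |e x i| ≤ γ * vecNorm1 (w i) + |t i| := by
      rw [he]
      calc |t i - w i ⬝ᵥ x| = |t i + -(w i ⬝ᵥ x)| := by rw [sub_eq_add_neg]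
      _ ≤ |t i| + |-(w i ⬝ᵥ x)| := abs_add_le _ _
      _ = |t i| + |w i ⬝ᵥ x| := by rw [abs_neg]
      _ ≤ |t i| + vecNorm1 (w i) * vecNorm1 x := by
          linarith [aux_abs_dot_le (w i) x]
      _ ≤ |t i| + vecNorm1 (w i) * γ := by
          have := mul_le_mul_of_nonneg_left hx (aux_vecNorm1_nonneg (w i))
          linarith
      _ = γ * vecNorm1 (w i) + |t i| := by ring
    have hnum : (e x i) ^ 2 ≤ (γ * vecNorm1 (w i) + |t i|) ^ 2 := by
      rw [← sq_abs (e x i)]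
      exact pow_le_pow_left₀ (abs_nonneg _) hB 2
    have hden : β ^ 2 ≤ (βi i) ^ 2 := pow_le_pow_left₀ hβ.le (hββi i) 2
    exact div_le_div₀ (sq_nonneg _) hnum (pow_pos hβ 2) hden
  have hRx : R x = ∑ i, g i • vecMulVec (w i) (w i) := by
    rw [hR]
  have hRpd : (R x).PosDef := by
    rw [hRx]; exact aux_posdef_weighted g hg0 w hposdef
  have hUnit : IsUnit (R x) := hRpd.isUnit
  refine ⟨hUnit, ?_⟩
  set M : Matrix (Fin n) (Fin n) ℝ := ∑ i, c i • vecMulVec (w i) (w i) with hM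
  have hMpd : M.PosDef := aux_posdef_weighted c hc0 w hposdef
  have hlmin : 0 < lambdaMin M := aux_lambdaMin_pos hn hMpd
  set u : Fin n → ℝ := f x with hu
  have hfu : u = (R x)⁻¹ *ᵥ P x := by rw [hu, hf]
  have hRu : R x *ᵥ u = P x := by
    rw [hfu, Matrix.mulVec_mulVec,
      Matrix.mul_nonsing_inv _ ((Matrix.isUnit_iff_isUnit_det _).1 hUnit),
      Matrix.one_mulVec]
  have hPx : P x = ∑ i, (g i * t i) • w i := by rw [hP]
  have key1 : lambdaMin M * (u ⬝ᵥ u) ≤ u ⬝ᵥ P x := by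
    calc lambdaMin M * (u ⬝ᵥ u) ≤ u ⬝ᵥ M *ᵥ u := aux_rayleigh hMpd.1 u
    _ = ∑ i, c i * (w i ⬝ᵥ u) * (w i ⬝ᵥ u) := by rw [hM, aux_quadform]
    _ ≤ ∑ i, g i * (w i ⬝ᵥ u) * (w i ⬝ᵥ u) := Finset.sum_le_sum fun i _ => by
        rw [mul_assoc, mul_assoc]
        exact mul_le_mul_of_nonneg_right (hcg i) (mul_self_nonneg _)
    _ = u ⬝ᵥ R x *ᵥ u := by rw [hRx, aux_quadform]
    _ = u ⬝ᵥ P x := by rw [hRu]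
  have key2 : nu (P x) ≤ ∑ i, vecNorm1 (w i) * |t i| := by
    rw [hPx]
    calc nu (∑ i, (g i * t i) • w i) ≤ ∑ i, |g i * t i| * nu (w i) := aux_nu_sum_le _ _
    _ ≤ ∑ i, vecNorm1 (w i) * |t i| := Finset.sum_le_sum fun i _ => by
        rw [abs_mul, abs_of_pos (hg0 i)]
        calc g i * |t i| * nu (w i) ≤ 1 * |t i| * vecNorm1 (w i) := by
              apply mul_le_mul _ (aux_nu_le_norm1 _) (aux_nu_nonneg _)
              · positivity
              · exact mul_le_mul_of_nonneg_right (hg1 i) (abs_nonneg _)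
        _ = vecNorm1 (w i) * |t i| := by ring
  have key3 : lambdaMin M * nu u ≤ nu (P x) := by
    rcases eq_or_lt_of_le (aux_nu_nonneg u) with h0 | h0
    · rw [← h0, mul_zero]; exact aux_nu_nonneg _
    · have h4 : (lambdaMin M * nu u) * nu u ≤ nu (P x) * nu u := by
        calc (lambdaMin M * nu u) * nu u = lambdaMin M * (nu u * nu u) := by ring
        _ = lambdaMin M * (u ⬝ᵥ u) := by rw [aux_nu_sq]
        _ ≤ u ⬝ᵥ P x := key1
        _ ≤ nu u * nu (P x) := aux_cs u (P x)
        _ = nu (P x) * nu u := by ring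
      exact le_of_mul_le_mul_right h4 h0
  have hφβ' : Real.sqrt n * (∑ i, vecNorm1 (w i) * |t i|) / lambdaMin M ≤ γ := by
    have h5 := hφβ
    rw [hφ] at h5
    exact h5
  calc vecNorm1 (f x) = vecNorm1 u := rfl
  _ ≤ Real.sqrt n * nu u := aux_norm1_le_nu u
  _ ≤ Real.sqrt n * (nu (P x) / lambdaMin M) := by
      refine mul_le_mul_of_nonneg_left ?_ (Real.sqrt_nonneg _)
      rw [le_div_iff₀ hlmin, mul_comm]
      exact key3
  _ ≤ Real.sqrt n * ((∑ i, vecNorm1 (w i) * |t i|) / lambdaMin M) := by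
      refine mul_le_mul_of_nonneg_left ?_ (Real.sqrt_nonneg _)
      exact div_le_div₀ (Finset.sum_nonneg fun i _ =>
        mul_nonneg (aux_vecNorm1_nonneg _) (abs_nonneg _)) key2 hlmin le_rfl
  _ = Real.sqrt n * (∑ i, vecNorm1 (w i) * |t i|) / lambdaMin M := by ring
  _ ≤ γ := hφβ'
end

section
/- In the α = 2 fixed-point setup: assume Σ_{i=1}^l w_i w_iᵀ is positive definite, γ > 0, w_i ≠ 0 for every i, and Σ_{i=1}^l ‖w_i‖₁ |t_i| > 0. Then the function φ is continuous and strictly decreasing on (0, ∞), φ(β) → +∞ as β → 0⁺, and φ(β) → ξ as β → +∞. Consequently, for every γ with γ > ξ there exists a unique β* ∈ (0, ∞) with φ(β*) = γ. -/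
open Real Matrix Filter Topology

section auxiliary

lemma lambdaMin_le_eigen {n : ℕ} {A : Matrix (Fin n) (Fin n) ℝ} (hA : A.IsHermitian) (i : Fin n) :
    lambdaMin A ≤ hA.eigenvalues i := by
  rw [lambdaMin, dif_pos hA]
  exact ciInf_le (Set.Finite.bddBelow (Set.finite_range _)) i

lemma dot_diagonal_sq {n : ℕ} (d y : Fin n → ℝ) :
    y ⬝ᵥ ((Matrix.diagonal d) *ᵥ y) = ∑ i, d i * (y i)^2 := by
  simp only [dotProduct, Matrix.mulVec_diagonal]
  exact Finset.sum_congr rfl fun i _ => by ring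

lemma rayleigh_le {n : ℕ} [Nonempty (Fin n)] {A : Matrix (Fin n) (Fin n) ℝ}
    (hA : A.IsHermitian) (x : Fin n → ℝ) :
    lambdaMin A * (x ⬝ᵥ x) ≤ x ⬝ᵥ (A *ᵥ x) := by
  set V : Matrix (Fin n) (Fin n) ℝ := (hA.eigenvectorUnitary : Matrix (Fin n) (Fin n) ℝ) with hV
  have hVs' : V * star V = 1 := (Matrix.mem_unitaryGroup_iff).mp hA.eigenvectorUnitary.2
  have hTr : Vᵀ = star V := by
    rw [Matrix.star_eq_conjTranspose, Matrix.conjTranspose]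
    ext i j; simp
  set y : Fin n → ℝ := star V *ᵥ x with hy
  have key : x ⬝ᵥ (A *ᵥ x) = ∑ i, hA.eigenvalues i * (y i)^2 := by
    conv_lhs => rw [hA.spectral_theorem]
    rw [Unitary.conjStarAlgAut_apply, ← mulVec_mulVec, ← mulVec_mulVec, dotProduct_mulVec, ← mulVec_transpose, hTr, ← hy]
    have : Matrix.diagonal (RCLike.ofReal ∘ hA.eigenvalues) = Matrix.diagonal hA.eigenvalues := by
      ext i j; simp [Matrix.diagonal]
    rw [this, dot_diagonal_sq]
  have key2 : x ⬝ᵥ x = ∑ i, (y i)^2 := by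
    have h2 : y ⬝ᵥ y = x ⬝ᵥ x := by
      rw [hy, dotProduct_mulVec, ← mulVec_transpose, ← hTr, Matrix.transpose_transpose,
        mulVec_mulVec, hTr, hVs', one_mulVec]
    calc x ⬝ᵥ x = y ⬝ᵥ y := h2.symm
    _ = ∑ i, (y i)^2 := by simp [dotProduct, pow_two]
  rw [key, key2, Finset.mul_sum]
  exact Finset.sum_le_sum fun i _ =>
    mul_le_mul_of_nonneg_right (lambdaMin_le_eigen hA i) (sq_nonneg _)

lemma exists_unit_eigen {n : ℕ} [Nonempty (Fin n)] {A : Matrix (Fin n) (Fin n) ℝ}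
    (hA : A.IsHermitian) :
    ∃ v : Fin n → ℝ, v ⬝ᵥ v = 1 ∧ v ⬝ᵥ (A *ᵥ v) = lambdaMin A := by
  obtain ⟨j, hj⟩ := Finite.exists_min hA.eigenvalues
  have hmin : lambdaMin A = hA.eigenvalues j := by
    rw [lambdaMin, dif_pos hA]
    exact le_antisymm (ciInf_le (Set.Finite.bddBelow (Set.finite_range _)) j) (le_ciInf hj)
  refine ⟨⇑(hA.eigenvectorBasis j), ?_, ?_⟩
  · have h1 : ‖hA.eigenvectorBasis j‖ = 1 := hA.eigenvectorBasis.orthonormal.1 j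
    have h2 := real_inner_self_eq_norm_sq (hA.eigenvectorBasis j)
    rw [h1] at h2
    simp only [PiLp.inner_apply, RCLike.inner_apply, starRingEnd_apply, star_trivial] at h2
    simpa [dotProduct, mul_comm] using h2
  · rw [hmin]
    simpa using (hA.eigenvalues_eq j).symm

lemma unit_ne_zero {n : ℕ} {v : Fin n → ℝ} (hv : v ⬝ᵥ v = 1) : v ≠ 0 := by
  intro h; rw [h] at hv; simp [dotProduct] at hv

lemma lambdaMin_pos {n : ℕ} [Nonempty (Fin n)] {A : Matrix (Fin n) (Fin n) ℝ}
    (hA : A.IsHermitian)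
    (h : ∀ x : Fin n → ℝ, x ≠ 0 → 0 < x ⬝ᵥ (A *ᵥ x)) : 0 < lambdaMin A := by
  obtain ⟨v, hv1, hv2⟩ := exists_unit_eigen hA
  rw [← hv2]; exact h v (unit_ne_zero hv1)

lemma lambdaMin_lt_lambdaMin {n : ℕ} [Nonempty (Fin n)] {A B : Matrix (Fin n) (Fin n) ℝ}
    (hA : A.IsHermitian)
    (hB : B.IsHermitian) (h : ∀ x : Fin n → ℝ, x ≠ 0 → x ⬝ᵥ (A *ᵥ x) < x ⬝ᵥ (B *ᵥ x)) :
    lambdaMin A < lambdaMin B := by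
  obtain ⟨v, hv1, hv2⟩ := exists_unit_eigen hB
  calc lambdaMin A = lambdaMin A * (v ⬝ᵥ v) := by rw [hv1, mul_one]
  _ ≤ v ⬝ᵥ (A *ᵥ v) := rayleigh_le hA v
  _ < v ⬝ᵥ (B *ᵥ v) := h v (unit_ne_zero hv1)
  _ = lambdaMin B := hv2

lemma quad_abs_le {n : ℕ} {M : Matrix (Fin n) (Fin n) ℝ} {x : Fin n → ℝ} (hx : x ⬝ᵥ x = 1) :
    |x ⬝ᵥ (M *ᵥ x)| ≤ ∑ i, ∑ j, |M i j| := by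
  have hxi : ∀ i, |x i| ≤ 1 := by
    intro i
    have h1 : x i ^ 2 ≤ 1 := by
      rw [← hx]
      simp only [dotProduct]
      rw [sq]
      exact Finset.single_le_sum (f := fun j => x j * x j)
        (fun j _ => mul_self_nonneg _) (Finset.mem_univ i)
    exact (sq_le_one_iff_abs_le_one _).mp h1
  calc |x ⬝ᵥ (M *ᵥ x)| = |∑ i, ∑ j, x i * M i j * x j| := by
        simp only [dotProduct, mulVec, Finset.mul_sum, dotProduct]
        congr 1
        exact Finset.sum_congr rfl fun i _ => Finset.sum_congr rfl fun j _ => by ring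
  _ ≤ ∑ i, ∑ j, |x i * M i j * x j| := by
        refine (Finset.abs_sum_le_sum_abs _ _).trans ?_
        exact Finset.sum_le_sum fun i _ => Finset.abs_sum_le_sum_abs _ _
  _ ≤ ∑ i, ∑ j, |M i j| := by
        refine Finset.sum_le_sum fun i _ => Finset.sum_le_sum fun j _ => ?_
        rw [abs_mul, abs_mul]
        calc |x i| * |M i j| * |x j| ≤ 1 * |M i j| * 1 := by
              apply mul_le_mul (mul_le_mul (hxi i) le_rfl (abs_nonneg _) ?_) (hxi j)
                (abs_nonneg _) ?_ <;> positivity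
        _ = |M i j| := by ring

lemma lambdaMin_sub_le {n : ℕ} [Nonempty (Fin n)] {A B : Matrix (Fin n) (Fin n) ℝ}
    (hA : A.IsHermitian) (hB : B.IsHermitian) :
    lambdaMin B - (∑ i, ∑ j, |A i j - B i j|) ≤ lambdaMin A := by
  obtain ⟨v, hv1, hv2⟩ := exists_unit_eigen hA
  have hsplit : v ⬝ᵥ (A *ᵥ v) = v ⬝ᵥ (B *ᵥ v) + v ⬝ᵥ ((A - B) *ᵥ v) := by
    rw [Matrix.sub_mulVec, dotProduct_sub]; ring
  have h1 : lambdaMin B ≤ v ⬝ᵥ (B *ᵥ v) := by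
    have := rayleigh_le hB v; rwa [hv1, mul_one] at this
  have h2 : -(∑ i, ∑ j, |A i j - B i j|) ≤ v ⬝ᵥ ((A - B) *ᵥ v) := by
    have := quad_abs_le (M := A - B) hv1
    have h3 := neg_le_of_abs_le this
    simpa [Matrix.sub_apply] using h3
  linarith [hv2 ▸ hsplit]

lemma abs_lambdaMin_sub_le {n : ℕ} [Nonempty (Fin n)] {A B : Matrix (Fin n) (Fin n) ℝ}
    (hA : A.IsHermitian) (hB : B.IsHermitian) :
    |lambdaMin A - lambdaMin B| ≤ ∑ i, ∑ j, |A i j - B i j| := by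
  rw [abs_sub_le_iff]
  have he : ∑ i, ∑ j, |B i j - A i j| = ∑ i, ∑ j, |A i j - B i j| :=
    Finset.sum_congr rfl fun i _ => Finset.sum_congr rfl fun j _ => abs_sub_comm _ _
  constructor
  · have h := lambdaMin_sub_le hB hA
    rw [he] at h
    linarith
  · have h := lambdaMin_sub_le hA hB
    linarith

lemma vecNorm1_pos {n : ℕ} {v : Fin n → ℝ} (hv : v ≠ 0) : 0 < vecNorm1 v := by
  rcases lt_or_eq_of_le
    (Finset.sum_nonneg (fun j (_ : j ∈ Finset.univ) => abs_nonneg (v j))) with h | h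
  · exact h
  · exfalso; apply hv; funext j
    have := (Finset.sum_eq_zero_iff_of_nonneg (fun j _ => abs_nonneg (v j))).mp h.symm j
      (Finset.mem_univ j)
    simpa using this

lemma sum_smul_vecMulVec_isHermitian {n l : ℕ} (e : Fin l → ℝ) (w : Fin l → Fin n → ℝ) :
    (∑ i, e i • vecMulVec (w i) (w i)).IsHermitian := by
  unfold Matrix.IsHermitian
  ext j k
  simp only [Matrix.conjTranspose_apply, Matrix.sum_apply, Matrix.smul_apply, vecMulVec_apply,
    smul_eq_mul, star_trivial]
  exact Finset.sum_congr rfl fun i _ => by ring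

lemma qf_sum_smul {n l : ℕ} (e : Fin l → ℝ) (w : Fin l → Fin n → ℝ) (x : Fin n → ℝ) :
    x ⬝ᵥ ((∑ i, e i • vecMulVec (w i) (w i)) *ᵥ x) = ∑ i, e i * (w i ⬝ᵥ x)^2 := by
  have expand : ∀ i, e i * (w i ⬝ᵥ x)^2 = ∑ j, ∑ k, x j * (e i * (w i j * w i k)) * x k := by
    intro i
    rw [sq, dotProduct, Finset.sum_mul_sum, Finset.mul_sum]
    refine Finset.sum_congr rfl fun j _ => ?_
    rw [Finset.mul_sum]
    exact Finset.sum_congr rfl fun k _ => by ring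
  simp only [expand]
  have L : x ⬝ᵥ ((∑ i, e i • vecMulVec (w i) (w i)) *ᵥ x)
      = ∑ j, ∑ k, ∑ i, x j * (e i * (w i j * w i k)) * x k := by
    simp only [dotProduct, mulVec, Matrix.sum_apply, Matrix.smul_apply, vecMulVec_apply,
      smul_eq_mul]
    refine Finset.sum_congr rfl fun j _ => ?_
    rw [Finset.mul_sum]
    refine Finset.sum_congr rfl fun k _ => ?_
    rw [Finset.sum_mul, Finset.mul_sum]
    exact Finset.sum_congr rfl fun i _ => by ring
  rw [L]
  calc ∑ j, ∑ k, ∑ i, x j * (e i * (w i j * w i k)) * x k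
      = ∑ j, ∑ i, ∑ k, x j * (e i * (w i j * w i k)) * x k :=
        Finset.sum_congr rfl fun j _ => Finset.sum_comm
    _ = ∑ i, ∑ j, ∑ k, x j * (e i * (w i j * w i k)) * x k := Finset.sum_comm

end auxiliary

lemma lambdaMin_zero {n : ℕ} [Nonempty (Fin n)] : lambdaMin (0 : Matrix (Fin n) (Fin n) ℝ) = 0 := by
  obtain ⟨v, hv1, hv2⟩ := exists_unit_eigen (A := (0 : Matrix (Fin n) (Fin n) ℝ)) isHermitian_zero
  rw [← hv2]; simp

/-- In the `α = 2` fixed-point setup with `Σ_i w_i w_iᵀ ≻ 0`, `γ > 0`,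
`w_i ≠ 0` for all `i`, and `Σ_i ‖w_i‖₁|t_i| > 0`, the function `φ` is continuous and
strictly decreasing on `(0,∞)`, `φ(β) → +∞` as `β → 0⁺`, `φ(β) → ξ` as `β → +∞`;
consequently for every `γ > ξ` there is a unique `β* ∈ (0,∞)` with `φ(β*) = γ`. -/
theorem phi_monotone_limits_unique_solution
    {n l : ℕ} (w : Fin l → Fin n → ℝ) (t : Fin l → ℝ)
    (hposdef : (∑ i, vecMulVec (w i) (w i)).PosDef)
    (γ : ℝ) (hγ : 0 < γ)
    (hw : ∀ i, w i ≠ 0)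
    (ht : 0 < ∑ i, vecNorm1 (w i) * |t i|)
    (ξ : ℝ)
    (hξ : ξ = Real.sqrt n * (∑ i, vecNorm1 (w i) * |t i|) /
        lambdaMin (∑ i, vecMulVec (w i) (w i)))
    (φ : ℝ → ℝ)
    (hφ : φ = fun b => Real.sqrt n * (∑ i, vecNorm1 (w i) * |t i|) /
        lambdaMin (∑ i, Real.exp (-((γ * vecNorm1 (w i) + |t i|) ^ 2 / b ^ 2)) •
          vecMulVec (w i) (w i))) :
    ContinuousOn φ (Set.Ioi 0) ∧
    StrictAntiOn φ (Set.Ioi 0) ∧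
    Tendsto φ (nhdsWithin 0 (Set.Ioi 0)) atTop ∧
    Tendsto φ atTop (𝓝 ξ) ∧
    (ξ < γ → ∃! b : ℝ, b ∈ Set.Ioi (0 : ℝ) ∧ φ b = γ) := by
  have hn0 : n ≠ 0 := by
    rintro rfl
    simp [vecNorm1] at ht
  haveI : Nonempty (Fin n) := Fin.pos_iff_nonempty.mp (Nat.pos_of_ne_zero hn0)
  set K : ℝ := Real.sqrt n * ∑ i, vecNorm1 (w i) * |t i| with hK
  have hKpos : 0 < K :=
    mul_pos (Real.sqrt_pos.mpr (by exact_mod_cast Nat.pos_of_ne_zero hn0)) ht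
  set c : Fin l → ℝ := fun i => γ * vecNorm1 (w i) + |t i| with hcdef
  have hcpos : ∀ i, 0 < c i := fun i =>
    add_pos_of_pos_of_nonneg (mul_pos hγ (vecNorm1_pos (hw i))) (abs_nonneg _)
  set e : ℝ → Fin l → ℝ := fun b i => Real.exp (-((c i)^2 / b^2)) with hedef
  set S : ℝ → Matrix (Fin n) (Fin n) ℝ := fun b => ∑ i, e b i • vecMulVec (w i) (w i) with hSdef
  have hφf : φ = fun b => K / lambdaMin (S b) := hφ
  have hSherm : ∀ b, (S b).IsHermitian := fun b => sum_smul_vecMulVec_isHermitian _ _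
  have hqf : ∀ b x, x ⬝ᵥ (S b *ᵥ x) = ∑ i, e b i * (w i ⬝ᵥ x)^2 := fun b x => qf_sum_smul _ _ _
  have hstar : ∀ x : Fin n → ℝ, star x = x := fun x => by funext j; simp
  have hsq : ∀ x : Fin n → ℝ, x ≠ 0 → 0 < ∑ i, (w i ⬝ᵥ x)^2 := by
    intro x hx
    have h := hposdef.dotProduct_mulVec_pos hx
    rw [hstar x] at h
    have h2 := qf_sum_smul (fun _ => (1:ℝ)) w x
    simp only [one_smul, one_mul] at h2
    rwa [h2] at h
  have hepos : ∀ b i, 0 < e b i := fun b i => Real.exp_pos _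
  have hex : ∀ x : Fin n → ℝ, x ≠ 0 → ∃ i0, 0 < (w i0 ⬝ᵥ x)^2 := by
    intro x hx
    have h0 : ∑ _i : Fin l, (0:ℝ) < ∑ i, (w i ⬝ᵥ x)^2 := by simpa using hsq x hx
    obtain ⟨i0, _, hi0⟩ := Finset.exists_lt_of_sum_lt h0
    exact ⟨i0, hi0⟩
  have hSq_pos : ∀ b (x : Fin n → ℝ), x ≠ 0 → 0 < x ⬝ᵥ (S b *ᵥ x) := by
    intro b x hx
    rw [hqf]
    obtain ⟨i0, hi0⟩ := hex x hx
    exact Finset.sum_pos' (fun i _ => mul_nonneg (le_of_lt (hepos b i)) (sq_nonneg _))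
      ⟨i0, Finset.mem_univ _, mul_pos (hepos b i0) hi0⟩
  have hlam_pos : ∀ b, 0 < lambdaMin (S b) := fun b => lambdaMin_pos (hSherm b) (hSq_pos b)
  have hlam_mono : ∀ a b, 0 < a → a < b → lambdaMin (S a) < lambdaMin (S b) := by
    intro a b ha hab
    have hee : ∀ i, e a i < e b i := by
      intro i
      apply Real.exp_lt_exp.mpr
      rw [neg_lt_neg_iff]
      refine div_lt_div_of_pos_left (pow_pos (hcpos i) 2) (pow_pos ha 2) ?_
      exact pow_lt_pow_left₀ hab (le_of_lt ha) two_ne_zero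
    refine lambdaMin_lt_lambdaMin (hSherm a) (hSherm b) ?_
    intro x hx
    rw [hqf, hqf]
    obtain ⟨i0, hi0⟩ := hex x hx
    refine Finset.sum_lt_sum
      (fun i _ => mul_le_mul_of_nonneg_right (le_of_lt (hee i)) (sq_nonneg _))
      ⟨i0, Finset.mem_univ _, mul_lt_mul_of_pos_right (hee i0) hi0⟩
  -- general limit transfer
  have hlam_tendsto : ∀ (F : Filter ℝ) (ε : Fin l → ℝ),
      (∀ i, Tendsto (fun b => e b i) F (𝓝 (ε i))) →
      Tendsto (fun b => lambdaMin (S b)) F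
        (𝓝 (lambdaMin (∑ i, ε i • vecMulVec (w i) (w i)))) := by
    intro F ε hε
    set T : Matrix (Fin n) (Fin n) ℝ := ∑ i, ε i • vecMulVec (w i) (w i) with hT
    have hTherm : T.IsHermitian := sum_smul_vecMulVec_isHermitian _ _
    have hb : ∀ b, |lambdaMin (S b) - lambdaMin T| ≤ ∑ j, ∑ k, |S b j k - T j k| :=
      fun b => abs_lambdaMin_sub_le (hSherm b) hTherm
    have hD : Tendsto (fun b => ∑ j, ∑ k, |S b j k - T j k|) F (𝓝 0) := by
      have h1 : Tendsto (fun b => ∑ j, ∑ k, |S b j k - T j k|) F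
          (𝓝 (∑ _j : Fin n, ∑ _k : Fin n, (0:ℝ))) := by
        refine tendsto_finset_sum _ fun j _ => tendsto_finset_sum _ fun k _ => ?_
        have hjk : Tendsto (fun b => S b j k) F (𝓝 (T j k)) := by
          have hSjk : ∀ b, S b j k = ∑ i, e b i * (w i j * w i k) := by
            intro b
            simp [hSdef, Matrix.sum_apply, vecMulVec_apply]
          have hTjk : T j k = ∑ i, ε i * (w i j * w i k) := by
            simp [hT, Matrix.sum_apply, vecMulVec_apply]
          rw [hTjk]
          simp only [hSjk]
          exact tendsto_finset_sum _ fun i _ => (hε i).mul_const _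
        have h2 : Tendsto (fun b => |S b j k - T j k|) F (𝓝 |T j k - T j k|) :=
          (hjk.sub (tendsto_const_nhds (x := T j k))).abs
        simpa using h2
      simpa using h1
    refine tendsto_of_tendsto_of_tendsto_of_le_of_le
      (g := fun b => lambdaMin T - ∑ j, ∑ k, |S b j k - T j k|)
      (h := fun b => lambdaMin T + ∑ j, ∑ k, |S b j k - T j k|)
      ?_ ?_ ?_ ?_
    · simpa using tendsto_const_nhds.sub hD
    · simpa using tendsto_const_nhds.add hD
    · intro b
      have h3 := (abs_le.mp (hb b)).1
      simp only
      linarith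
    · intro b
      have h3 := (abs_le.mp (hb b)).2
      simp only
      linarith
  -- continuity of lambdaMin ∘ S at positive points
  have hcontAt : ∀ b0 : ℝ, 0 < b0 → ContinuousAt (fun b => lambdaMin (S b)) b0 := by
    intro b0 hb0
    have h1 : ∀ i, Tendsto (fun b => e b i) (𝓝 b0) (𝓝 (e b0 i)) := by
      intro i
      have : ContinuousAt (fun b => e b i) b0 := by
        apply Real.continuous_exp.continuousAt.comp
        apply ContinuousAt.neg
        exact ContinuousAt.div continuousAt_const ((continuous_pow 2).continuousAt)
          (pow_ne_zero 2 (ne_of_gt hb0))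
      exact this
    exact hlam_tendsto (𝓝 b0) (e b0) h1
  -- PART 1: continuity
  have part1 : ContinuousOn φ (Set.Ioi 0) := by
    rw [hφf]
    apply continuousOn_of_forall_continuousAt
    intro b0 hb0
    exact ContinuousAt.div continuousAt_const (hcontAt b0 hb0) (ne_of_gt (hlam_pos b0))
  -- PART 2: strict antitonicity
  have part2 : StrictAntiOn φ (Set.Ioi 0) := by
    intro a ha b hb hab
    rw [hφf]
    exact div_lt_div_of_pos_left hKpos (hlam_pos a) (hlam_mono a b ha hab)
  -- PART 3: limit at 0+
  have part3 : Tendsto φ (nhdsWithin 0 (Set.Ioi 0)) atTop := by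
    have hb2 : Tendsto (fun b : ℝ => b^2) (nhdsWithin 0 (Set.Ioi 0))
        (nhdsWithin 0 (Set.Ioi 0)) := by
      refine tendsto_nhdsWithin_of_tendsto_nhds_of_eventually_within _ ?_ ?_
      · have h4 : Tendsto (fun b : ℝ => b^2) (𝓝 0) (𝓝 0) := by
          simpa using (continuous_pow 2).tendsto (0:ℝ)
        exact h4.mono_left nhdsWithin_le_nhds
      · exact eventually_mem_nhdsWithin.mono fun b hb => Set.mem_Ioi.mpr (pow_pos hb 2)
    have hεlim : ∀ i, Tendsto (fun b => e b i) (nhdsWithin 0 (Set.Ioi 0)) (𝓝 0) := by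
      intro i
      have hdiv : Tendsto (fun b : ℝ => (c i)^2 / b^2) (nhdsWithin 0 (Set.Ioi 0)) atTop := by
        have hinv : Tendsto (fun x : ℝ => x⁻¹) (nhdsWithin 0 (Set.Ioi 0)) atTop :=
          tendsto_inv_nhdsGT_zero
        have h5 := (hinv.comp hb2).const_mul_atTop (pow_pos (hcpos i) 2)
        simpa [div_eq_mul_inv, Function.comp] using h5
      have h6 : Tendsto (fun b : ℝ => -((c i)^2 / b^2)) (nhdsWithin 0 (Set.Ioi 0)) atBot :=
        tendsto_neg_atTop_atBot.comp hdiv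
      exact Real.tendsto_exp_atBot.comp h6
    have hlam0 : Tendsto (fun b => lambdaMin (S b)) (nhdsWithin 0 (Set.Ioi 0)) (𝓝 0) := by
      have h7 := hlam_tendsto (nhdsWithin 0 (Set.Ioi 0)) (fun _ => 0) hεlim
      have h8 : (∑ i, (0:ℝ) • vecMulVec (w i) (w i)) = (0 : Matrix (Fin n) (Fin n) ℝ) := by
        simp
      rwa [h8, lambdaMin_zero] at h7
    have hlamw : Tendsto (fun b => lambdaMin (S b)) (nhdsWithin 0 (Set.Ioi 0))
        (nhdsWithin 0 (Set.Ioi 0)) :=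
      tendsto_nhdsWithin_of_tendsto_nhds_of_eventually_within _ hlam0
        (Filter.Eventually.of_forall fun b => hlam_pos b)
    have hinvtop : Tendsto (fun b => (lambdaMin (S b))⁻¹) (nhdsWithin 0 (Set.Ioi 0)) atTop :=
      tendsto_inv_nhdsGT_zero.comp hlamw
    rw [hφf]
    have := hinvtop.const_mul_atTop hKpos
    simpa [div_eq_mul_inv] using this
  -- PART 4: limit at infinity
  have hlamM : 0 < lambdaMin (∑ i, vecMulVec (w i) (w i)) := by
    refine lambdaMin_pos hposdef.1 ?_
    intro x hx
    have h := hposdef.dotProduct_mulVec_pos hx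
    rwa [hstar x] at h
  have part4 : Tendsto φ atTop (𝓝 ξ) := by
    have h1 : ∀ i, Tendsto (fun b => e b i) atTop (𝓝 1) := by
      intro i
      have hdiv : Tendsto (fun b : ℝ => (c i)^2 / b^2) atTop (𝓝 0) :=
        Tendsto.div_atTop tendsto_const_nhds (tendsto_pow_atTop two_ne_zero)
      have hneg : Tendsto (fun b : ℝ => -((c i)^2 / b^2)) atTop (𝓝 0) := by
        simpa using hdiv.neg
      have h2 := (Real.continuous_exp.tendsto 0).comp hneg
      rw [Real.exp_zero] at h2; exact h2
    have h2 := hlam_tendsto atTop (fun _ => 1) h1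
    have hM : (∑ i, (1:ℝ) • vecMulVec (w i) (w i)) = ∑ i, vecMulVec (w i) (w i) := by simp
    rw [hM] at h2
    rw [hφf, hξ]
    exact tendsto_const_nhds.div h2 (ne_of_gt hlamM)
  refine ⟨part1, part2, part3, part4, ?_⟩
  -- PART 5: existence and uniqueness
  intro hξγ
  have hev1 : ∀ᶠ b in nhdsWithin 0 (Set.Ioi 0), γ < φ b := part3.eventually (eventually_gt_atTop γ)
  obtain ⟨b1, hγb1, hb1pos⟩ := (hev1.and eventually_mem_nhdsWithin).exists
  have hev2 : ∀ᶠ b in atTop, φ b < γ := part4.eventually_lt_const hξγ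
  obtain ⟨b2, ⟨hφb2, hb12⟩, hb2pos⟩ :=
    ((hev2.and (eventually_gt_atTop b1)).and (eventually_gt_atTop 0)).exists
  have hss : Set.Icc b1 b2 ⊆ Set.Ioi 0 := fun x hx => lt_of_lt_of_le hb1pos hx.1
  have hIVT := intermediate_value_Icc' (le_of_lt hb12) (part1.mono hss)
  have hγmem : γ ∈ Set.Icc (φ b2) (φ b1) := ⟨le_of_lt hφb2, le_of_lt hγb1⟩
  obtain ⟨bs, hbsmem, hbsval⟩ := hIVT hγmem
  refine ⟨bs, ⟨hss hbsmem, hbsval⟩, ?_⟩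
  intro y hy
  exact part2.injOn hy.1 (hss hbsmem) (hy.2.trans hbsval.symm)
end

section
/- In the α = 2 fixed-point setup with Σ_{i=1}^l w_i w_iᵀ positive definite (so R(x) is positive definite for every x and f is smooth): for every x ∈ ℝ^n and every coordinate index j ∈ {1,…,n}, the partial derivative of f satisfies ∂f/∂x_j(x) = −R(x)⁻¹ [ Σ_{i=1}^l (2 e_i(x) w_{i,j} / β_i²) G_{β_i}(e_i(x)) w_i w_iᵀ ] f(x) + R(x)⁻¹ [ Σ_{i=1}^l (2 e_i(x) w_{i,j} / β_i²) G_{β_i}(e_i(x)) t_i w_i ], where w_{i,j} denotes the j-th component of w_i. -/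
open Real Matrix Filter Topology

attribute [local instance] Matrix.linftyOpNormedAddCommGroup Matrix.linftyOpNormedSpace
  Matrix.linftyOpNormedRing Matrix.linftyOpNormedAlgebra

/-- dot product with a fixed vector as a continuous linear map -/
noncomputable def dotCLM {n : ℕ} (w : Fin n → ℝ) : (Fin n → ℝ) →L[ℝ] ℝ :=
  ∑ j, w j • ContinuousLinearMap.proj j

lemma dotCLM_apply {n : ℕ} (w v : Fin n → ℝ) : dotCLM w v = w ⬝ᵥ v := by
  simp [dotCLM, dotProduct]

lemma dotCLM_single {n : ℕ} (w : Fin n → ℝ) (j : Fin n) :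
    dotCLM w (Pi.single j 1) = w j := by
  rw [dotCLM_apply, dotProduct_single, mul_one]

/-- matrix-vector multiplication, curried, as a continuous linear map -/
noncomputable def mulVecCLM {n : ℕ} :
    Matrix (Fin n) (Fin n) ℝ →L[ℝ] ((Fin n → ℝ) →L[ℝ] (Fin n → ℝ)) :=
  LinearMap.toContinuousLinearMap
    ((LinearMap.toContinuousLinearMap.toLinearMap).comp Matrix.toLin'.toLinearMap)

lemma mulVecCLM_apply {n : ℕ} (A : Matrix (Fin n) (Fin n) ℝ) (v : Fin n → ℝ) :
    mulVecCLM A v = A *ᵥ v := by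
  simp [mulVecCLM, Matrix.toLin'_apply]

lemma exp_deriv {n : ℕ} (w : Fin n → ℝ) (t b : ℝ) (x : Fin n → ℝ) :
    HasFDerivAt (fun y : Fin n → ℝ => Real.exp (-((t - w ⬝ᵥ y) ^ 2 / b ^ 2)))
      ((2 * (t - w ⬝ᵥ x) / b ^ 2 * Real.exp (-((t - w ⬝ᵥ x) ^ 2 / b ^ 2))) • dotCLM w) x := by
  have hdot : HasFDerivAt (fun y : Fin n → ℝ => w ⬝ᵥ y) (dotCLM w) x := by
    have hfun : ⇑(dotCLM w) = fun y : Fin n → ℝ => w ⬝ᵥ y := funext (dotCLM_apply w)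
    rw [← hfun]; exact (dotCLM w).hasFDerivAt
  have hs : HasFDerivAt (fun y : Fin n → ℝ => t - w ⬝ᵥ y) (-(dotCLM w)) x := hdot.const_sub t
  have hexp := ((hs.mul hs).mul_const (-(b ^ 2)⁻¹)).exp
  have hfun2 : (fun y : Fin n → ℝ => Real.exp (-((t - w ⬝ᵥ y) ^ 2 / b ^ 2)))
      = fun y : Fin n → ℝ => Real.exp ((t - w ⬝ᵥ y) * (t - w ⬝ᵥ y) * -(b ^ 2)⁻¹) := by
    funext y; congr 1; ring
  rw [hfun2]
  refine hexp.congr_fderiv ?_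
  ext v
  simp only [ContinuousLinearMap.smul_apply, ContinuousLinearMap.add_apply,
    ContinuousLinearMap.neg_apply, smul_eq_mul, Pi.mul_apply]
  rw [show (t - w ⬝ᵥ x) * (t - w ⬝ᵥ x) * -(b ^ 2)⁻¹ = -((t - w ⬝ᵥ x) ^ 2 / b ^ 2) by ring]
  ring

lemma quad_helper {n l : ℕ} (w : Fin l → Fin n → ℝ) (c : Fin l → ℝ) (z : Fin n → ℝ) :
    z ⬝ᵥ ((∑ i, c i • vecMulVec (w i) (w i)) *ᵥ z) = ∑ i, c i * (w i ⬝ᵥ z) ^ 2 := by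
  simp only [dotProduct, Matrix.mulVec, Matrix.sum_apply, Matrix.smul_apply,
    vecMulVec_apply, smul_eq_mul, pow_two, Finset.mul_sum, Finset.sum_mul]
  have h1 : ∀ k : Fin n, (∑ m : Fin n, ∑ i : Fin l, z k * (c i * (w i k * w i m) * z m))
      = ∑ i : Fin l, ∑ m : Fin n, z k * (c i * (w i k * w i m) * z m) := fun k =>
    Finset.sum_comm (f := fun m i => z k * (c i * (w i k * w i m) * z m))
  rw [Finset.sum_congr rfl fun k _ => h1 k,
    Finset.sum_comm (f := fun k i => ∑ m : Fin n, z k * (c i * (w i k * w i m) * z m))]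
  exact Finset.sum_congr rfl fun i _ => Finset.sum_congr rfl fun k _ =>
    Finset.sum_congr rfl fun m _ => by ring

lemma sumPosDef {n l : ℕ} (w : Fin l → Fin n → ℝ)
    (hposdef : (∑ i, vecMulVec (w i) (w i)).PosDef)
    (c : Fin l → ℝ) (hc : ∀ i, 0 < c i) :
    (∑ i, c i • vecMulVec (w i) (w i)).PosDef := by
  refine Matrix.PosDef.of_dotProduct_mulVec_pos ?_ ?_
  · ext i k
    simp only [Matrix.conjTranspose_apply, Matrix.sum_apply, Matrix.smul_apply,
      vecMulVec_apply, smul_eq_mul, star_trivial]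
    exact Finset.sum_congr rfl fun m _ => by ring
  · intro z hz
    have h0 := hposdef.dotProduct_mulVec_pos hz
    rw [star_trivial] at h0 ⊢
    rw [show (∑ i, vecMulVec (w i) (w i)) = ∑ i, (1:ℝ) • vecMulVec (w i) (w i) by
      simp] at h0
    rw [quad_helper] at h0
    simp only [one_mul] at h0
    rw [quad_helper]
    obtain ⟨i0, -, hi0⟩ := Finset.exists_ne_zero_of_sum_ne_zero h0.ne'
    refine Finset.sum_pos' (fun i _ => mul_nonneg (hc i).le (sq_nonneg _))
      ⟨i0, Finset.mem_univ _, ?_⟩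
    exact mul_pos (hc i0) (lt_of_le_of_ne (sq_nonneg _) (Ne.symm hi0))

/-- In the `α = 2` fixed-point setup with `Σ_i w_i w_iᵀ ≻ 0` (so `R(x)`
is positive definite for every `x` and `f` is smooth), for every `x` and every
coordinate `j`,
`∂f/∂x_j(x) = −R(x)⁻¹ [Σ_i (2 e_i(x) w_{i,j}/β_i²) G_{β_i}(e_i(x)) w_i w_iᵀ] f(x)
  + R(x)⁻¹ [Σ_i (2 e_i(x) w_{i,j}/β_i²) G_{β_i}(e_i(x)) t_i w_i]`. -/
theorem fixed_point_map_partial_derivative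
    {n l : ℕ} (w : Fin l → Fin n → ℝ) (t : Fin l → ℝ)
    (βi : Fin l → ℝ) (hβi : ∀ i, 0 < βi i)
    (hposdef : (∑ i, vecMulVec (w i) (w i)).PosDef)
    (e : (Fin n → ℝ) → Fin l → ℝ) (he : e = fun x i => t i - w i ⬝ᵥ x)
    (R : (Fin n → ℝ) → Matrix (Fin n) (Fin n) ℝ)
    (hR : R = fun x => ∑ i, Real.exp (-((e x i) ^ 2 / (βi i) ^ 2)) • vecMulVec (w i) (w i))
    (P : (Fin n → ℝ) → (Fin n → ℝ))
    (hP : P = fun x => ∑ i, (Real.exp (-((e x i) ^ 2 / (βi i) ^ 2)) * t i) • w i)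
    (f : (Fin n → ℝ) → (Fin n → ℝ)) (hf : f = fun x => (R x)⁻¹.mulVec (P x)) :
    ∀ x : Fin n → ℝ, DifferentiableAt ℝ f x ∧ ∀ j : Fin n,
      fderiv ℝ f x (Pi.single j 1) =
        -(R x)⁻¹.mulVec
            ((∑ i, (2 * e x i * w i j / (βi i) ^ 2 *
                Real.exp (-((e x i) ^ 2 / (βi i) ^ 2))) • vecMulVec (w i) (w i)).mulVec (f x))
        + (R x)⁻¹.mulVec
            (∑ i, (2 * e x i * w i j / (βi i) ^ 2 *
                Real.exp (-((e x i) ^ 2 / (βi i) ^ 2)) * t i) • w i) := by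
  intro x
  haveI : CompleteSpace (Matrix (Fin n) (Fin n) ℝ) := FiniteDimensional.complete ℝ _
  -- positivity and invertibility of R
  have hRpos : ∀ y, (R y).PosDef := fun y => by
    rw [hR]; exact sumPosDef w hposdef _ (fun i => exp_pos _)
  have hRunit : ∀ y, IsUnit (R y) := fun y =>
    (Matrix.isUnit_iff_isUnit_det _).mpr (isUnit_iff_ne_zero.mpr (hRpos y).det_pos.ne')
  -- scalar coefficient
  set a : Fin l → ℝ :=
    fun i => 2 * e x i / βi i ^ 2 * Real.exp (-(e x i ^ 2 / βi i ^ 2)) with ha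
  -- derivative of the Gaussian weights
  have key : ∀ i, HasFDerivAt (fun y => Real.exp (-((e y i) ^ 2 / βi i ^ 2)))
      ((a i) • dotCLM (w i)) x := by
    intro i
    rw [ha]
    simp only [he]
    exact exp_deriv (w i) (t i) (βi i) x
  -- derivative of R
  have hRd : HasFDerivAt R
      (∑ i, ((a i) • dotCLM (w i)).smulRight (vecMulVec (w i) (w i))) x := by
    rw [hR]
    exact HasFDerivAt.fun_sum fun i _ => (key i).smul_const _
  -- derivative of P
  have hPd : HasFDerivAt P
      (∑ i, ((t i) • ((a i) • dotCLM (w i))).smulRight (w i)) x := by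
    rw [hP]
    exact HasFDerivAt.fun_sum fun i _ => ((key i).mul_const (t i)).smul_const (w i)
  -- derivative of Ring.inverse ∘ R
  have hcoe : ((hRunit x).unit⁻¹ : (Matrix (Fin n) (Fin n) ℝ)ˣ).val = (R x)⁻¹ := by
    rw [Matrix.coe_units_inv, (hRunit x).unit_spec]
  have hinv0 := hasFDerivAt_ringInverse (𝕜 := ℝ) (hRunit x).unit
  rw [hcoe, (hRunit x).unit_spec] at hinv0
  have hinv := hinv0.comp x hRd
  have hc := (mulVecCLM.hasFDerivAt).comp x hinv
  have hF := hc.clm_apply hPd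
  have hfF : HasFDerivAt f
      ((mulVecCLM (Ring.inverse (R x))).comp
          (∑ i, ((t i) • ((a i) • dotCLM (w i))).smulRight (w i)) +
        (mulVecCLM.comp
          ((-ContinuousLinearMap.mulLeftRight ℝ _ (R x)⁻¹ (R x)⁻¹).comp
            (∑ i, ((a i) • dotCLM (w i)).smulRight (vecMulVec (w i) (w i))))).flip (P x)) x := by
    rw [hf]
    have hfun : (fun y => (R y)⁻¹ *ᵥ P y)
        = fun y => mulVecCLM (Ring.inverse (R y)) (P y) := funext fun y => by
      rw [mulVecCLM_apply, Matrix.nonsing_inv_eq_ringInverse]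
    rw [hfun]
    exact hF
  refine ⟨hfF.differentiableAt, fun j => ?_⟩
  rw [hfF.fderiv]
  simp only [ContinuousLinearMap.add_apply, ContinuousLinearMap.coe_comp', Function.comp_apply,
    ContinuousLinearMap.flip_apply, ContinuousLinearMap.coe_sum', Finset.sum_apply,
    ContinuousLinearMap.smulRight_apply, ContinuousLinearMap.smul_apply,
    ContinuousLinearMap.neg_apply, ContinuousLinearMap.mulLeftRight_apply,
    mulVecCLM_apply, dotCLM_single, smul_eq_mul, ← Matrix.nonsing_inv_eq_ringInverse]
  erw [ContinuousLinearMap.comp_apply, ContinuousLinearMap.comp_apply]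
  simp only [ContinuousLinearMap.coe_sum', Finset.sum_apply,
    ContinuousLinearMap.smulRight_apply, ContinuousLinearMap.smul_apply,
    ContinuousLinearMap.neg_apply, ContinuousLinearMap.mulLeftRight_apply,
    mulVecCLM_apply, dotCLM_single, smul_eq_mul]
  have hS : (∑ i, (a i * w i j) • vecMulVec (w i) (w i))
      = ∑ i, (2 * e x i * w i j / βi i ^ 2 *
          Real.exp (-(e x i ^ 2 / βi i ^ 2))) • vecMulVec (w i) (w i) :=
    Finset.sum_congr rfl fun i _ => by simp only [ha]; congr 1; ring
  have hT : (∑ i, (t i * (a i * w i j)) • w i)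
      = ∑ i, (2 * e x i * w i j / βi i ^ 2 *
          Real.exp (-(e x i ^ 2 / βi i ^ 2)) * t i) • w i :=
    Finset.sum_congr rfl fun i _ => by simp only [ha]; congr 1; ring
  rw [hS, hT, add_comm]
  simp only [hf]
  congr 1
  simp only [Matrix.neg_mulVec, Matrix.mulVec_mulVec, Matrix.mul_assoc]
end
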